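/- arXiv:1609.05255 — 13 statements merged into one kernel-verified Lean document; each statement's English description precedes it below -/
import Mathlib

section
/- Let A be a v×v real (0,1)-matrix with v = m·n satisfying A Aᵀ = Aᵀ A = k·I_v + λ₁·(I_m ⊗ J_n − I_v) + λ₂·(J_v − I_m ⊗ J_n). Then (λ₁ − λ₂)·A·(I_m ⊗ J_n)·Aᵀ = (λ₁ − λ₂)·((n·(λ₁ − λ₂) + k − λ₁)·(I_m ⊗ J_n) + n·λ₂·J_v). -/
open Matrix

noncomputable section

/-- The all-ones matrix `J_v` (with `v = m·n`, indexed by `Fin m × Fin n`). -/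
def Jmat (m n : ℕ) : Matrix (Fin m × Fin n) (Fin m × Fin n) ℝ :=
  Matrix.of fun _ _ => 1

/-- The block-diagonal matrix `I_m ⊗ J_n` (indexed by `Fin m × Fin n`). -/
def Kmat (m n : ℕ) : Matrix (Fin m × Fin n) (Fin m × Fin n) ℝ :=
  Matrix.of fun p q => if p.1 = q.1 then 1 else 0

lemma cardfil1 (m n : ℕ) (a : Fin m) :
    (Finset.filter (fun x : Fin m × Fin n => a = x.1) Finset.univ).card = n := by
  have : Finset.filter (fun x : Fin m × Fin n => a = x.1) Finset.univ
      = {a} ×ˢ Finset.univ := by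
    ext x
    simp only [Finset.mem_filter, Finset.mem_product, Finset.mem_singleton,
      Finset.mem_univ, true_and, and_true]
    exact eq_comm
  simp [this]

lemma cardfil2 (m n : ℕ) (a : Fin m) :
    (Finset.filter (fun x : Fin m × Fin n => x.1 = a) Finset.univ).card = n := by
  have : Finset.filter (fun x : Fin m × Fin n => x.1 = a) Finset.univ
      = {a} ×ˢ Finset.univ := by
    ext x
    simp only [Finset.mem_filter, Finset.mem_product, Finset.mem_singleton,
      Finset.mem_univ, true_and, and_true]
  simp [this]

lemma hKK (m n : ℕ) : Kmat m n * Kmat m n = (n:ℝ) • Kmat m n := by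
  ext p q
  have key : ∀ x, Kmat m n p x * Kmat m n x q
      = if p.1 = q.1 ∧ x.1 = q.1 then (1:ℝ) else 0 := by
    intro x
    by_cases h1 : p.1 = x.1 <;> by_cases h2 : x.1 = q.1 <;>
      simp [Kmat, h1, h2]
  rw [Matrix.mul_apply, Finset.sum_congr rfl (fun x _ => key x)]
  by_cases h : p.1 = q.1
  · simp [h, cardfil2, Kmat]
  · simp [h, Kmat]

lemma hKJ (m n : ℕ) : Kmat m n * Jmat m n = (n:ℝ) • Jmat m n := by
  ext p q
  simp [Kmat, Jmat, Matrix.mul_apply, Matrix.smul_apply, cardfil1]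

lemma hJK (m n : ℕ) : Jmat m n * Kmat m n = (n:ℝ) • Jmat m n := by
  ext p q
  simp [Kmat, Jmat, Matrix.mul_apply, Matrix.smul_apply, cardfil2]

lemma hJJ (m n : ℕ) : Jmat m n * Jmat m n = ((m:ℝ)*(n:ℝ)) • Jmat m n := by
  ext p q
  simp [Jmat, Matrix.mul_apply, Matrix.smul_apply]


/-- Bose's lemma: for the incidence matrix of a symmetric group divisible design,
`(λ₁−λ₂)·A·(I_m⊗J_n)·Aᵀ = (λ₁−λ₂)·((n(λ₁−λ₂)+k−λ₁)·(I_m⊗J_n) + nλ₂·J_v)`. -/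
theorem stmt0 (m n : ℕ) (hm : 2 ≤ m) (hn : 2 ≤ n) (k l1 l2 : ℝ)
    (A : Matrix (Fin m × Fin n) (Fin m × Fin n) ℝ)
    (h01 : ∀ p q, A p q = 0 ∨ A p q = 1)
    (h1 : A * Aᵀ = k • (1 : Matrix (Fin m × Fin n) (Fin m × Fin n) ℝ)
        + l1 • (Kmat m n - 1) + l2 • (Jmat m n - Kmat m n))
    (h2 : Aᵀ * A = k • (1 : Matrix (Fin m × Fin n) (Fin m × Fin n) ℝ)
        + l1 • (Kmat m n - 1) + l2 • (Jmat m n - Kmat m n)) :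
    (l1 - l2) • (A * Kmat m n * Aᵀ) =
      (l1 - l2) • (((n : ℝ) * (l1 - l2) + k - l1) • Kmat m n
        + ((n : ℝ) * l2) • Jmat m n) := by
  -- row and column sums are k
  have hsq : ∀ p q, A p q * A p q = A p q := by
    intro p q; rcases h01 p q with h | h <;> rw [h] <;> ring
  have hrowsum : ∀ p, (∑ r, A p r) = k := by
    intro p
    have := congrFun (congrFun h1 p) p
    simp only [Matrix.mul_apply, Matrix.transpose_apply, Matrix.add_apply,
      Matrix.smul_apply, Matrix.sub_apply, Matrix.one_apply_eq, Kmat, Jmat,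
      Matrix.of_apply, if_pos rfl, smul_eq_mul] at this
    simpa [hsq] using this
  have hcolsum : ∀ q, (∑ r, A r q) = k := by
    intro q
    have := congrFun (congrFun h2 q) q
    simp only [Matrix.mul_apply, Matrix.transpose_apply, Matrix.add_apply,
      Matrix.smul_apply, Matrix.sub_apply, Matrix.one_apply_eq, Kmat, Jmat,
      Matrix.of_apply, if_pos rfl, smul_eq_mul] at this
    simpa [hsq] using this
  have hAJ : A * Jmat m n = k • Jmat m n := by
    ext p q; simp [Jmat, Matrix.mul_apply, Matrix.smul_apply, hrowsum p]
  have hJA : Jmat m n * A = k • Jmat m n := by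
    ext p q; simp [Jmat, Matrix.mul_apply, Matrix.smul_apply, hcolsum q]
  have hJT : (Jmat m n)ᵀ = Jmat m n := by ext p q; simp [Jmat]
  have hJAt : Jmat m n * Aᵀ = k • Jmat m n := by
    have := congrArg Matrix.transpose hAJ
    simpa [Matrix.transpose_mul, hJT, Matrix.transpose_smul] using this
  have hAtJ : Aᵀ * Jmat m n = k • Jmat m n := by
    have := congrArg Matrix.transpose hJA
    simpa [Matrix.transpose_mul, hJT, Matrix.transpose_smul] using this
  have hAJA : A * Jmat m n * Aᵀ = (k*k) • Jmat m n := by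
    rw [hAJ, Matrix.smul_mul, hJAt, smul_smul]
  -- identity k² = k + l1(n-1) + l2(mn-n)
  have hk2 : k * k = k + l1 * ((n:ℝ) - 1) + l2 * ((m:ℝ)*(n:ℝ) - (n:ℝ)) := by
    have hM : (A * Aᵀ) * Jmat m n = (k*k) • Jmat m n := by
      rw [Matrix.mul_assoc, hAtJ, Matrix.mul_smul, hAJ, smul_smul]
    rw [h1] at hM
    have hM2 : (k*k) • Jmat m n =
        (k + l1 * ((n:ℝ) - 1) + l2 * ((m:ℝ)*(n:ℝ) - (n:ℝ))) • Jmat m n := by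
      rw [← hM]
      simp only [Matrix.add_mul, Matrix.smul_mul, Matrix.sub_mul, Matrix.one_mul,
        hKJ, hJJ]
      module
    have p0 : Fin m × Fin n := ⟨⟨0, by omega⟩, ⟨0, by omega⟩⟩
    have := congrFun (congrFun hM2 p0) p0
    simpa [Jmat, Matrix.smul_apply] using this
  -- extract (l1-l2)•K from h2
  have hsub : A * ((l1 - l2) • Kmat m n) * Aᵀ
      = A * (Aᵀ * A - (k - l1) • 1 - l2 • Jmat m n) * Aᵀ := by
    congr 2
    rw [h2]; module
  calc (l1 - l2) • (A * Kmat m n * Aᵀ)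
      = A * ((l1 - l2) • Kmat m n) * Aᵀ := by
        rw [Matrix.mul_smul, Matrix.smul_mul]
    _ = A * (Aᵀ * A - (k - l1) • 1 - l2 • Jmat m n) * Aᵀ := hsub
    _ = (A * Aᵀ) * (A * Aᵀ) - (k - l1) • (A * Aᵀ) - l2 • ((k*k) • Jmat m n) := by
        rw [Matrix.mul_sub, Matrix.mul_sub, Matrix.sub_mul, Matrix.sub_mul]
        rw [Matrix.mul_smul, Matrix.mul_one, Matrix.smul_mul,
          Matrix.mul_smul, Matrix.smul_mul, ← Matrix.mul_assoc, ← Matrix.mul_assoc,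
          hAJA]
    _ = (l1 - l2) • (((n : ℝ) * (l1 - l2) + k - l1) • Kmat m n
        + ((n : ℝ) * l2) • Jmat m n) := by
        rw [h1, hk2]
        simp only [Matrix.mul_add, Matrix.add_mul, Matrix.mul_sub, Matrix.sub_mul,
          Matrix.mul_smul, Matrix.smul_mul, Matrix.mul_one, Matrix.one_mul,
          hKK m n, hKJ m n, hJK m n, hJJ m n, smul_sub, smul_add, smul_smul]
        module


end
end

section
/- Let L₁ and L₂ be UFS Latin squares of order n on symbol set {1,…,n}, with entries l(i,j) and l'(i,j) respectively. Then the n×n array whose (i,j)-entry is the unique b satisfying b = l(i,a) = l'(j,a) for the unique column index a where rows i of L₁ and j of L₂ agree, is again a Latin square. -/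
/-- An `n×n` array is a Latin square if every symbol occurs exactly once in each
row and each column, i.e. each row and each column is a bijection `Fin n → Fin n`. -/
def IsLatinSquare {n : ℕ} (L : Fin n → Fin n → Fin n) : Prop :=
  (∀ i, Function.Bijective (L i)) ∧ (∀ j, Function.Bijective fun i => L i j)

/-- Two Latin squares are UFS if superimposing any row of the first on any row of
the second yields exactly one position where the entries coincide. -/
def IsUFS {n : ℕ} (L1 L2 : Fin n → Fin n → Fin n) : Prop :=
  ∀ i j, ∃! a, L1 i a = L2 j a

/-- `M` is the array obtained from UFS Latin squares `L1, L2`: its `(i,j)`-entry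
is the unique common symbol `b = L1 i a = L2 j a` at the unique agreeing column `a`. -/
def IsUFSComp {n : ℕ} (L1 L2 M : Fin n → Fin n → Fin n) : Prop :=
  ∀ i j, ∃ a, L1 i a = L2 j a ∧ M i j = L1 i a

/-- The array obtained from a pair of UFS Latin squares is again a Latin square. -/
theorem stmt3 {n : ℕ} (L1 L2 M : Fin n → Fin n → Fin n)
    (hL1 : IsLatinSquare L1) (hL2 : IsLatinSquare L2)
    (hUFS : IsUFS L1 L2) (hM : IsUFSComp L1 L2 M) :
    IsLatinSquare M := by
  constructor
  · intro i
    rw [← Finite.injective_iff_bijective]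
    intro j j' h
    obtain ⟨a, ha, hb⟩ := hM i j
    obtain ⟨a', ha', hb'⟩ := hM i j'
    have haa : a = a' := (hL1.1 i).1 (by rw [← hb, ← hb', h])
    exact (hL2.2 a).1 (show L2 j a = L2 j' a by
      rw [← ha, haa, ← ha'])
  · intro j
    rw [← Finite.injective_iff_bijective]
    intro i i' h
    obtain ⟨a, ha, hb⟩ := hM i j
    obtain ⟨a', ha', hb'⟩ := hM i' j
    simp only at h
    have haa : a = a' := (hL2.1 j).1 (by rw [← ha, ← ha', ← hb, ← hb', h])
    exact (hL1.2 a).1 (show L1 i a = L1 i' a by rw [← hb, haa, ← hb', h])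
end

section
/- Let L₁, L₂, L₃ be mutually UFS Latin squares of order n on {1,…,n}, and for i ≠ j let L_{i,j} denote the Latin square obtained from the pair (L_i, L_j) via the UFS composition. Then L_{1,3} and L_{2,3} are themselves UFS Latin squares, and the Latin square obtained from (L_{1,3}, L_{2,3}) equals L_{1,2}. -/
lemma comp_val {n : ℕ} {L1 L2 M : Fin n → Fin n → Fin n}
    (h : IsUFS L1 L2) (hc : IsUFSComp L1 L2 M) :
    ∀ i j a, L1 i a = L2 j a → M i j = L1 i a := by
  intro i j a ha
  obtain ⟨b, hb1, hb2⟩ := hc i j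
  obtain ⟨c, _, huniq⟩ := h i j
  rw [hb2, show b = a from (huniq b hb1).trans (huniq a ha).symm]

lemma comp_latin {n : ℕ} {L1 L3 L13 : Fin n → Fin n → Fin n}
    (hL1 : IsLatinSquare L1) (hL3 : IsLatinSquare L3)
    (hc13 : IsUFSComp L1 L3 L13) : IsLatinSquare L13 := by
  constructor
  · intro i
    rw [← Finite.injective_iff_bijective]
    intro j j' h
    obtain ⟨a, ha1, ha2⟩ := hc13 i j
    obtain ⟨a', ha1', ha2'⟩ := hc13 i j'
    rw [ha2, ha2'] at h
    have haa : a = a' := (hL1.1 i).injective h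
    subst haa
    exact (hL3.2 a).injective (ha1.symm.trans (h.trans ha1'))
  · intro j
    rw [← Finite.injective_iff_bijective]
    intro i i' h
    obtain ⟨a, ha1, ha2⟩ := hc13 i j
    obtain ⟨a', ha1', ha2'⟩ := hc13 i' j
    simp only [ha2, ha2'] at h
    have haa : a = a' := by
      refine (hL3.1 j).injective ?_
      rw [← ha1, ← ha1', h]
    subst haa
    exact (hL1.2 a).injective h

/-- For mutually UFS Latin squares `L1, L2, L3`, the composed Latin squares
`L13` and `L23` are UFS Latin squares, and their UFS composition is `L12`. -/
theorem stmt4 {n : ℕ} (L1 L2 L3 L12 L13 L23 : Fin n → Fin n → Fin n)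
    (hL1 : IsLatinSquare L1) (hL2 : IsLatinSquare L2) (hL3 : IsLatinSquare L3)
    (h12 : IsUFS L1 L2) (h13 : IsUFS L1 L3) (h23 : IsUFS L2 L3)
    (hc12 : IsUFSComp L1 L2 L12) (hc13 : IsUFSComp L1 L3 L13)
    (hc23 : IsUFSComp L2 L3 L23) :
    IsLatinSquare L13 ∧ IsLatinSquare L23 ∧ IsUFS L13 L23 ∧
      IsUFSComp L13 L23 L12 := by
  have key : ∀ i j, ∃ a, L13 i a = L23 j a ∧ L12 i j = L13 i a ∧
      ∀ a', L13 i a' = L23 j a' → a' = a := by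
    intro i j
    obtain ⟨p, hp, hpu⟩ := h12 i j
    obtain ⟨a, ha⟩ := (hL3.2 p).surjective (L1 i p)
    simp only at ha
    have h13v : L13 i a = L1 i p := comp_val h13 hc13 i a p ha.symm
    have h23v : L23 j a = L2 j p := comp_val h23 hc23 j a p (hp ▸ ha.symm)
    refine ⟨a, by rw [h13v, h23v, hp], by rw [h13v]; exact comp_val h12 hc12 i j p hp, ?_⟩
    intro a' he
    obtain ⟨q, hq1, hq2⟩ := hc13 i a'
    obtain ⟨q', hq1', hq2'⟩ := hc23 j a'
    have hqq : q = q' := by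
      refine (hL3.1 a').injective ?_
      rw [← hq1, ← hq1', ← hq2, ← hq2', he]
    subst hqq
    have hqp : q = p := hpu q (hq1.trans hq1'.symm)
    refine (hL3.2 p).injective ?_
    show L3 a' p = L3 a p
    rw [ha, ← hqp]
    exact hq1.symm
  refine ⟨comp_latin hL1 hL3 hc13, comp_latin hL2 hL3 hc23, ?_, ?_⟩
  · intro i j
    obtain ⟨a, h1, _, h3⟩ := key i j
    exact ⟨a, h1, h3⟩
  · intro i j
    obtain ⟨a, h1, h2, _⟩ := key i j
    exact ⟨a, h1, h2⟩
end

section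
/- Let F = F_{2^n} be a finite field of characteristic 2 with nonzero elements indexed α₂,…,α_{2^n}, and let S_k be the Latin square with (i,j)-entry α_k(α_i − α_j). For distinct k, k', the UFS composition of S_k and S_{k'} equals S_m where α_m = α_k α_{k'}/(α_k − α_{k'}); moreover the UFS composition of S_k and S_m equals S_{k'}. -/
/-!
Over any field, rows `i` of `S_a : (i, x) ↦ a (i - x)` and `j` of `S_b` agree exactly in the
column `x = (a i - b j)/(a - b)`, where the common value is `c (i - j)` with `c = ab/(b - a)`.
The map `b ↦ ab/(b - a)` is an involution, so composing `S_a` with `S_c` gives back `S_b`.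
Characteristic 2 only enters to identify `ab/(b - a)` with the paper's `ab/(a - b)`.
-/

section UFSComposition

variable {F : Type*} [Field F]

theorem exists_mul_sub_eq_mul_sub {a b : F} (hab : a ≠ b) (i j : F) :
    ∃ x : F, a * (i - x) = b * (j - x) ∧ a * (i - x) = a * b / (b - a) * (i - j) := by
  have hab' : a - b ≠ 0 := sub_ne_zero.mpr hab
  have hba' : b - a ≠ 0 := sub_ne_zero.mpr hab.symm
  refine ⟨(a * i - b * j) / (a - b), ?_, ?_⟩
  · field_simp
    ring
  · field_simp
    rw [← neg_sub a b]
    ring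

theorem mul_div_sub_ne_zero {a b : F} (ha : a ≠ 0) (hb : b ≠ 0) (hab : a ≠ b) :
    a * b / (b - a) ≠ 0 :=
  div_ne_zero (mul_ne_zero ha hb) (sub_ne_zero.mpr hab.symm)

theorem mul_div_sub_sub_self {a b : F} (hab : a ≠ b) :
    a * b / (b - a) - a = a ^ 2 / (b - a) := by
  have hba : b - a ≠ 0 := sub_ne_zero.mpr hab.symm
  field_simp
  ring

theorem mul_div_sub_ne_self {a b : F} (ha : a ≠ 0) (hab : a ≠ b) : a * b / (b - a) ≠ a := by
  rw [← sub_ne_zero, mul_div_sub_sub_self hab]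
  exact div_ne_zero (pow_ne_zero 2 ha) (sub_ne_zero.mpr hab.symm)

theorem mul_div_sub_involutive {a b : F} (ha : a ≠ 0) (hab : a ≠ b) :
    a * (a * b / (b - a)) / (a * b / (b - a) - a) = b := by
  have hba : b - a ≠ 0 := sub_ne_zero.mpr hab.symm
  rw [mul_div_sub_sub_self hab]
  field_simp

end UFSComposition

theorem stmt6_general (F : Type*) [Field F] [CharP F 2]
    (k k' : F) (hk : k ≠ 0) (hk' : k' ≠ 0) (hne : k ≠ k')
    (m : F) (hm : m = k * k' / (k - k')) :
    m ≠ 0 ∧ k ≠ m ∧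
    (∀ i j : F, ∃ a : F, k * (i - a) = k' * (j - a) ∧ k * (i - a) = m * (i - j)) ∧
    (∀ i j : F, ∃ a : F, k * (i - a) = m * (j - a) ∧ k * (i - a) = k' * (i - j)) := by
  have hm' : m = k * k' / (k' - k) := by
    rw [hm, CharTwo.sub_eq_add, CharTwo.sub_eq_add, add_comm]
  have hkm : k ≠ m := hm' ▸ (mul_div_sub_ne_self hk hne).symm
  refine ⟨hm' ▸ mul_div_sub_ne_zero hk hk' hne, hkm,
    fun i j => hm' ▸ exists_mul_sub_eq_mul_sub hne i j, fun i j => ?_⟩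
  rw [← mul_div_sub_involutive hk hne, ← hm']
  exact exists_mul_sub_eq_mul_sub hkm i j

/-- In a field `F` of characteristic 2, for distinct nonzero `k, k'`, let
`m = k·k'/(k − k')`. Then the UFS composition of the Latin squares `S_k` and
`S_{k'}` (with entries `k(i−j)` resp. `k'(i−j)`) equals `S_m`: at every position
`(i,j)` the unique common value of the agreeing column is `m·(i−j)`.
Moreover the UFS composition of `S_k` and `S_m` equals `S_{k'}`. -/
theorem stmt6 (F : Type*) [Field F] [Fintype F] [CharP F 2]
    (k k' : F) (hk : k ≠ 0) (hk' : k' ≠ 0) (hne : k ≠ k')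
    (m : F) (hm : m = k * k' / (k - k')) :
    m ≠ 0 ∧ k ≠ m ∧
    (∀ i j : F, ∃ a : F, k * (i - a) = k' * (j - a) ∧ k * (i - a) = m * (i - j)) ∧
    (∀ i j : F, ∃ a : F, k * (i - a) = m * (j - a) ∧ k * (i - a) = k' * (i - j)) :=
  stmt6_general F k k' hk hk' hne m hm
end

section
/- Let H = (h_{ij}) be a generalized Hadamard matrix GH(g,λ) over a finite abelian group G of order g, and let φ be a faithful permutation representation of G by g×g permutation matrices with Σ_{x∈G} φ(x) = J_g. For k ∈ {1,…,gλ} define the g²λ × g²λ matrix C_k whose (i,j)-block is φ(−h_{ki} + h_{kj}). Then: (i) Σ_{k=1}^{gλ} C_k = gλ·(I_{gλ} ⊗ I_g) + λ·(J_{gλ} − I_{gλ}) ⊗ J_g; (ii) C_k C_kᵀ = gλ·C_k for each k; (iii) C_k C_{k'}ᵀ = λ·J_{g²λ} for distinct k, k'. -/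
open Matrix

noncomputable section

/-- Basic properties of the block matrices `C_k` built from a generalized Hadamard
matrix `GH(g,λ)` over a finite abelian group `G` of order `g`, via a permutation
representation `φ` of `G` (so `Σ_{x∈G} φ(x) = J_g`):
(i) `Σ_k C_k = gλ·I + λ·(J_{gλ} − I_{gλ}) ⊗ J_g`;
(ii) `C_k C_kᵀ = gλ·C_k`;
(iii) `C_k C_{k'}ᵀ = λ·J` for `k ≠ k'`. -/
theorem stmt7 {G : Type*} [AddCommGroup G] [Fintype G] [DecidableEq G]
    (g lam : ℕ) (hg : Fintype.card G = g) (hlam : 0 < lam)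
    (H : Fin (g * lam) → Fin (g * lam) → G)
    (hGH : ∀ i k, i ≠ k → ∀ x : G,
      (Finset.univ.filter fun j => H i j - H k j = x).card = lam)
    (φ : G → Matrix (Fin g) (Fin g) ℝ)
    (h01 : ∀ x i j, φ x i j = 0 ∨ φ x i j = 1)
    (hmul : ∀ x y, φ (x + y) = φ x * φ y)
    (htr : ∀ x, (φ x)ᵀ = φ (-x))
    (hzero : φ 0 = 1)
    (hsum : ∑ x : G, φ x = Matrix.of fun _ _ => (1 : ℝ))
    (C : Fin (g * lam) →
      Matrix (Fin (g * lam) × Fin g) (Fin (g * lam) × Fin g) ℝ)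
    (hC : ∀ k p q, C k p q = φ (-(H k p.1) + H k q.1) p.2 q.2) :
    (∑ k, C k =
        ((g : ℝ) * lam) • (1 : Matrix (Fin (g * lam) × Fin g) (Fin (g * lam) × Fin g) ℝ)
        + (lam : ℝ) • Matrix.of (fun p q : Fin (g * lam) × Fin g =>
            if p.1 = q.1 then (0 : ℝ) else 1)) ∧
    (∀ k, C k * (C k)ᵀ = ((g : ℝ) * lam) • C k) ∧
    (∀ k k', k ≠ k' → C k * (C k')ᵀ =
      (lam : ℝ) • Matrix.of fun _ _ : Fin (g * lam) × Fin g => (1 : ℝ)) := by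
  have hg0 : 0 < g := hg ▸ Fintype.card_pos
  -- J-absorption
  have hJr : ∀ x, φ x * Matrix.of (fun _ _ => (1 : ℝ)) = Matrix.of fun _ _ => (1 : ℝ) := by
    intro x
    rw [← hsum, Finset.mul_sum]
    calc ∑ y, φ x * φ y = ∑ y, φ (x + y) := by simp_rw [← hmul]
      _ = ∑ y, φ y := Fintype.sum_equiv (Equiv.addLeft x) _ _ (fun y => rfl)
  have hJl : ∀ x, Matrix.of (fun _ _ => (1 : ℝ)) * φ x = Matrix.of fun _ _ => (1 : ℝ) := by
    intro x
    rw [← hsum, Finset.sum_mul]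
    calc ∑ y, φ y * φ x = ∑ y, φ (y + x) := by simp_rw [← hmul]
      _ = ∑ y, φ y := Fintype.sum_equiv (Equiv.addRight x) _ _ (fun y => rfl)
  have hrow : ∀ x (a : Fin g), ∑ c, φ x a c = 1 := by
    intro x a
    have := congrFun (congrFun (hJr x) a) ⟨0, hg0⟩
    simpa [Matrix.mul_apply] using this
  have hcol : ∀ x (b : Fin g), ∑ c, φ x c b = 1 := by
    intro x b
    have := congrFun (congrFun (hJl x) ⟨0, hg0⟩) b
    simpa [Matrix.mul_apply] using this
  -- entrywise product identities
  have hent : ∀ x y (a b : Fin g), (∑ c, φ x a c * φ y b c) = φ (x - y) a b := by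
    intro x y a b
    calc ∑ c, φ x a c * φ y b c = ∑ c, φ x a c * φ (-y) c b := by
          refine Finset.sum_congr rfl fun c _ => ?_
          rw [← htr]; rfl
      _ = (φ x * φ (-y)) a b := (Matrix.mul_apply).symm
      _ = φ (x - y) a b := by rw [← hmul, sub_eq_add_neg]
  have hent2 : ∀ x y (a b : Fin g), (∑ c, φ x c a * φ y c b) = φ (-x + y) a b := by
    intro x y a b
    calc ∑ c, φ x c a * φ y c b = ∑ c, φ (-x) a c * φ y c b := by
          refine Finset.sum_congr rfl fun c _ => ?_
          rw [← htr]; rfl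
      _ = (φ (-x) * φ y) a b := (Matrix.mul_apply).symm
      _ = φ (-x + y) a b := by rw [← hmul]
  -- GH row-difference sum
  have hGHsum : ∀ k k', k ≠ k' →
      ∑ m, φ (H k m - H k' m) = (lam : ℝ) • Matrix.of (fun _ _ => (1 : ℝ)) := by
    intro k k' hkk
    rw [← Finset.sum_fiberwise Finset.univ (fun m => H k m - H k' m)
      (fun m => φ (H k m - H k' m))]
    have inner : ∀ x : G,
        ∑ m ∈ Finset.univ.filter (fun m => H k m - H k' m = x),
          φ (H k m - H k' m) = lam • φ x := by
      intro x
      rw [Finset.sum_congr rfl (fun m hm => by rw [(Finset.mem_filter.mp hm).2]),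
        Finset.sum_const, hGH k k' hkk x]
    rw [Finset.sum_congr rfl fun x _ => inner x, ← Finset.smul_sum, hsum,
      Nat.cast_smul_eq_nsmul]
  set K : Matrix (Fin (g * lam) × Fin g) (Fin (g * lam) × Fin g) ℝ :=
    Matrix.of (fun p q : Fin (g * lam) × Fin g =>
      if p.1 = q.1 then (0 : ℝ) else 1) with hK
  set D : Matrix (Fin (g * lam) × Fin g) (Fin (g * lam) × Fin g) ℝ :=
    Matrix.of (fun p q => φ (H p.1 q.1) p.2 q.2) with hD
  set M : Matrix (Fin (g * lam) × Fin g) (Fin (g * lam) × Fin g) ℝ :=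
    ((g : ℝ) * lam) • (1 : Matrix (Fin (g * lam) × Fin g) (Fin (g * lam) × Fin g) ℝ)
      + (lam : ℝ) • K with hM
  -- D * Dᵀ = M
  have hDDT : D * Dᵀ = M := by
    ext ⟨k, a⟩ ⟨k', b⟩
    rw [Matrix.mul_apply, Fintype.sum_prod_type]
    simp only [hD, Matrix.transpose_apply, Matrix.of_apply]
    rw [Finset.sum_congr rfl fun m _ => hent (H k m) (H k' m) a b]
    by_cases hkk : k = k'
    · subst hkk
      simp only [sub_self, hzero, Finset.sum_const, Finset.card_univ,
        Fintype.card_fin, hM, hK, Matrix.add_apply, Matrix.smul_apply,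
        Matrix.one_apply, Matrix.of_apply, Prod.mk.injEq, smul_eq_mul]
      by_cases hab : a = b <;> simp [hab, Matrix.one_apply, nsmul_eq_mul]
    · have := congrFun (congrFun (hGHsum k k' hkk) a) b
      simp only [Matrix.sum_apply, Matrix.smul_apply, Matrix.of_apply,
        smul_eq_mul, mul_one] at this
      rw [this]
      simp [hM, hK, Matrix.one_apply, Prod.ext_iff, hkk]
  -- K commutes with D
  have hcard : (Finset.univ : Finset (Fin (g * lam))).card = g * lam := by
    simp
  have hKD : K * D = Matrix.of (fun _ _ => (g * lam : ℝ) - 1) := by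
    ext ⟨p, a⟩ ⟨q, b⟩
    rw [Matrix.mul_apply, Fintype.sum_prod_type]
    simp only [hK, hD, Matrix.of_apply]
    have h1 : ∀ m : Fin (g * lam),
        (∑ c, (if p = m then (0:ℝ) else 1) * φ (H m q) c b)
          = if p = m then 0 else 1 := by
      intro m
      rw [← Finset.mul_sum, hcol, mul_one]
    rw [Finset.sum_congr rfl fun m _ => h1 m,
      Finset.sum_congr rfl (fun m (_ : m ∈ Finset.univ) =>
        (by split <;> ring : (if p = m then (0:ℝ) else 1) = 1 - if p = m then 1 else 0))]
    rw [Finset.sum_sub_distrib, Finset.sum_const, Finset.sum_ite_eq Finset.univ p fun _ => (1:ℝ)]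
    simp
  have hDK : D * K = Matrix.of (fun _ _ => (g * lam : ℝ) - 1) := by
    ext ⟨p, a⟩ ⟨q, b⟩
    rw [Matrix.mul_apply, Fintype.sum_prod_type]
    simp only [hK, hD, Matrix.of_apply]
    have h1 : ∀ m : Fin (g * lam),
        (∑ c, φ (H p m) a c * (if m = q then (0:ℝ) else 1))
          = if m = q then 0 else 1 := by
      intro m
      rw [← Finset.sum_mul, hrow, one_mul]
    rw [Finset.sum_congr rfl fun m _ => h1 m,
      Finset.sum_congr rfl (fun m (_ : m ∈ Finset.univ) =>
        (by split <;> ring : (if m = q then (0:ℝ) else 1) = 1 - if m = q then 1 else 0))]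
    rw [Finset.sum_sub_distrib, Finset.sum_const, Finset.sum_ite_eq' Finset.univ q fun _ => (1:ℝ)]
    simp
  -- M commutes with D
  have hMD : M * D = D * M := by
    rw [hM, add_mul, mul_add, Matrix.smul_mul, Matrix.mul_smul, Matrix.smul_mul,
      Matrix.mul_smul, one_mul, mul_one, hKD, hDK]
  have hMs : Mᵀ = M := by
    rw [← hDDT, Matrix.transpose_mul, Matrix.transpose_transpose, hDDT]
  set N : Matrix (Fin (g * lam) × Fin g) (Fin (g * lam) × Fin g) ℝ :=
    Dᵀ * D - M with hN
  have hNs : Nᵀ = N := by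
    rw [hN, Matrix.transpose_sub, Matrix.transpose_mul, Matrix.transpose_transpose, hMs]
  have e1 : Matrix.trace ((Dᵀ * D) * (Dᵀ * D)) = Matrix.trace ((Dᵀ * D) * M) := by
    have h2 : (Dᵀ * D) * (Dᵀ * D) = Dᵀ * ((D * Dᵀ) * D) := by simp only [mul_assoc]
    rw [h2, hDDT, hMD, ← mul_assoc]
  have e2 : Matrix.trace (M * M) = Matrix.trace ((Dᵀ * D) * M) := by
    nth_rewrite 1 [← hDDT]
    rw [mul_assoc, Matrix.trace_mul_comm, mul_assoc, hMD, ← mul_assoc]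
  have e3 : Matrix.trace (M * (Dᵀ * D)) = Matrix.trace ((Dᵀ * D) * M) :=
    Matrix.trace_mul_comm _ _
  have htr0 : Matrix.trace (N * N) = 0 := by
    have hexp : N * N = (Dᵀ*D)*(Dᵀ*D) - (Dᵀ*D)*M - M*(Dᵀ*D) + M*M := by
      rw [hN]; noncomm_ring
    rw [hexp, Matrix.trace_add, Matrix.trace_sub, Matrix.trace_sub, e1, e2, e3]
    ring
  have hN0 : N = 0 := by
    have ht : Matrix.trace (N * N) = ∑ p, ∑ q, N p q ^ 2 := by
      calc Matrix.trace (N * N) = ∑ i, ∑ j, N i j * N j i := by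
            simp [Matrix.trace, Matrix.diag, Matrix.mul_apply]
        _ = ∑ i, ∑ j, N i j ^ 2 := by
            refine Finset.sum_congr rfl fun i _ => Finset.sum_congr rfl fun j _ => ?_
            have hji : N j i = N i j := by
              have := congrFun (congrFun hNs i) j
              simpa [Matrix.transpose_apply] using this
            rw [hji]; ring
    have hsq : ∑ p, ∑ q, (N p q)^2 = 0 := by rw [← ht]; exact htr0
    ext p q
    have h1 := (Finset.sum_eq_zero_iff_of_nonneg
      (fun i _ => Finset.sum_nonneg fun j _ => sq_nonneg _)).mp hsq p (Finset.mem_univ p)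
    have h2 := (Finset.sum_eq_zero_iff_of_nonneg
      (fun j _ => sq_nonneg _)).mp h1 q (Finset.mem_univ q)
    have := pow_eq_zero_iff (two_ne_zero) |>.mp h2
    simpa using this
  have hDtD : Dᵀ * D = M := by rwa [sub_eq_zero] at hN0
  have hsumC : ∑ k, C k = Dᵀ * D := by
    ext ⟨p, a⟩ ⟨q, b⟩
    rw [Matrix.sum_apply, Matrix.mul_apply, Fintype.sum_prod_type]
    simp only [hD, Matrix.transpose_apply, Matrix.of_apply]
    rw [Finset.sum_congr rfl fun m (_ : m ∈ Finset.univ) => hent2 (H m p) (H m q) a b]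
    exact Finset.sum_congr rfl fun k _ => by rw [hC]
  refine ⟨hsumC.trans hDtD, ?_, ?_⟩
  · intro k
    ext ⟨p, a⟩ ⟨q, b⟩
    rw [Matrix.mul_apply, Fintype.sum_prod_type]
    simp only [Matrix.transpose_apply]
    have h1 : ∀ (m : Fin (g*lam)), (∑ c, C k (p,a) (m,c) * C k (q,b) (m,c))
        = φ (-(H k p) + H k q) a b := by
      intro m
      simp only [hC]
      rw [hent]
      congr 1
      abel
    rw [Finset.sum_congr rfl fun m _ => h1 m, Finset.sum_const, Finset.card_univ,
      Fintype.card_fin, Matrix.smul_apply, hC]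
    simp only [nsmul_eq_mul, smul_eq_mul]
    push_cast
    ring
  · intro k k' hkk
    ext ⟨p, a⟩ ⟨q, b⟩
    rw [Matrix.mul_apply, Fintype.sum_prod_type]
    simp only [Matrix.transpose_apply, hC]
    have h1 : ∀ m : Fin (g*lam),
        (∑ c, φ (-(H k p) + H k m) a c * φ (-(H k' q) + H k' m) b c)
          = φ (-(H k p) + ((H k m - H k' m) + H k' q)) a b := by
      intro m; rw [hent]; congr 1; abel
    have h3 : (∑ m, φ (-(H k p) + ((H k m - H k' m) + H k' q))) =
        (lam : ℝ) • Matrix.of (fun _ _ => (1:ℝ)) := by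
      calc ∑ m, φ (-(H k p) + ((H k m - H k' m) + H k' q))
          = ∑ m, φ (-(H k p)) * (φ (H k m - H k' m) * φ (H k' q)) := by
            refine Finset.sum_congr rfl fun m _ => ?_
            rw [hmul, hmul]
        _ = φ (-(H k p)) * ((∑ m, φ (H k m - H k' m)) * φ (H k' q)) := by
            rw [← Finset.mul_sum, ← Finset.sum_mul]
        _ = φ (-(H k p)) * (((lam:ℝ) • Matrix.of fun _ _ => (1:ℝ)) * φ (H k' q)) := by
            rw [hGHsum k k' hkk]
        _ = (lam:ℝ) • (φ (-(H k p)) * (Matrix.of (fun _ _ => (1:ℝ)) * φ (H k' q))) := by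
            rw [Matrix.smul_mul, Matrix.mul_smul]
        _ = (lam:ℝ) • Matrix.of fun _ _ => (1:ℝ) := by rw [hJl, hJr]
    rw [Finset.sum_congr rfl fun m _ => h1 m, ← Matrix.sum_apply, h3]
    simp

end
end

section
/- Let H be a generalized Hadamard matrix GH(g,λ) over an abelian group G with permutation representation φ, and let φ(H) be the g²λ × g²λ block matrix whose (i,j)-block is φ(h_{ij}). Then φ(H)·φ(H)ᵀ = φ(H)ᵀ·φ(H) = gλ·I_{g²λ} + λ·(J_{g²λ} − I_{gλ} ⊗ J_g); that is, φ(H) is the incidence matrix of a symmetric group divisible design with parameters (g²λ, gλ, gλ, g, 0, λ). -/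
open Matrix

noncomputable section

/-- If `H` is a generalized Hadamard matrix `GH(g,λ)` over a finite abelian group
`G` of order `g` with permutation representation `φ`, then the block matrix
`φ(H)` (with `(i,j)`-block `φ(h_{ij})`) satisfies
`φ(H)·φ(H)ᵀ = φ(H)ᵀ·φ(H) = gλ·I + λ·(J − I_{gλ}⊗J_g)`,
i.e. it is the incidence matrix of a symmetric group divisible design with
parameters `(g²λ, gλ, gλ, g, 0, λ)`. -/
theorem stmt8 {G : Type*} [AddCommGroup G] [Fintype G] [DecidableEq G]
    (g lam : ℕ) (hg : Fintype.card G = g) (hlam : 0 < lam)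
    (H : Fin (g * lam) → Fin (g * lam) → G)
    (hGH : ∀ i k, i ≠ k → ∀ x : G,
      (Finset.univ.filter fun j => H i j - H k j = x).card = lam)
    (φ : G → Matrix (Fin g) (Fin g) ℝ)
    (h01 : ∀ x i j, φ x i j = 0 ∨ φ x i j = 1)
    (hmul : ∀ x y, φ (x + y) = φ x * φ y)
    (htr : ∀ x, (φ x)ᵀ = φ (-x))
    (hzero : φ 0 = 1)
    (hsum : ∑ x : G, φ x = Matrix.of fun _ _ => (1 : ℝ))
    (B : Matrix (Fin (g * lam) × Fin g) (Fin (g * lam) × Fin g) ℝ)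
    (hB : ∀ p q, B p q = φ (H p.1 q.1) p.2 q.2) :
    B * Bᵀ =
      ((g : ℝ) * lam) • (1 : Matrix (Fin (g * lam) × Fin g) (Fin (g * lam) × Fin g) ℝ)
      + (lam : ℝ) • (Matrix.of (fun _ _ : Fin (g * lam) × Fin g => (1 : ℝ))
          - Matrix.of fun p q : Fin (g * lam) × Fin g =>
              if p.1 = q.1 then (1 : ℝ) else 0) ∧
    Bᵀ * B =
      ((g : ℝ) * lam) • (1 : Matrix (Fin (g * lam) × Fin g) (Fin (g * lam) × Fin g) ℝ)
      + (lam : ℝ) • (Matrix.of (fun _ _ : Fin (g * lam) × Fin g => (1 : ℝ))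
          - Matrix.of fun p q : Fin (g * lam) × Fin g =>
              if p.1 = q.1 then (1 : ℝ) else 0) := by
  set M : Matrix (Fin (g * lam) × Fin g) (Fin (g * lam) × Fin g) ℝ :=
    ((g : ℝ) * lam) • (1 : Matrix (Fin (g * lam) × Fin g) (Fin (g * lam) × Fin g) ℝ)
      + (lam : ℝ) • (Matrix.of (fun _ _ : Fin (g * lam) × Fin g => (1 : ℝ))
          - Matrix.of fun p q : Fin (g * lam) × Fin g =>
              if p.1 = q.1 then (1 : ℝ) else 0) with hM
  -- row sums and column sums of each φ x equal 1
  have hrowJ : ∀ x : G, φ x * Matrix.of (fun _ _ => (1 : ℝ)) = Matrix.of fun _ _ => (1 : ℝ) := by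
    intro x
    rw [← hsum, Finset.mul_sum]
    calc ∑ y : G, φ x * φ y = ∑ y : G, φ (x + y) := by
          simp [hmul]
      _ = ∑ y : G, φ y := Fintype.sum_equiv (Equiv.addLeft x) _ _ (fun y => rfl)
  have hcolJ : ∀ x : G, Matrix.of (fun _ _ => (1 : ℝ)) * φ x = Matrix.of fun _ _ => (1 : ℝ) := by
    intro x
    rw [← hsum, Finset.sum_mul]
    calc ∑ y : G, φ y * φ x = ∑ y : G, φ (y + x) := by
          simp [hmul]
      _ = ∑ y : G, φ y := Fintype.sum_equiv (Equiv.addRight x) _ _ (fun y => rfl)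
  have hrow : ∀ (x : G) (i : Fin g), ∑ c : Fin g, φ x i c = 1 := by
    intro x i
    have := congrFun (congrFun (hrowJ x) i) i
    simpa [Matrix.mul_apply] using this
  have hcol : ∀ (x : G) (c : Fin g), ∑ i : Fin g, φ x i c = 1 := by
    intro x c
    have := congrFun (congrFun (hcolJ x) c) c
    simpa [Matrix.mul_apply] using this
  have hsumentry : ∀ i c : Fin g, ∑ x : G, φ x i c = 1 := by
    intro i c
    have := congrFun (congrFun hsum i) c
    simpa [Matrix.sum_apply] using this
  have hblock : ∀ (a b : G) (i k : Fin g), ∑ c : Fin g, φ a i c * φ b k c = φ (a - b) i k := by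
    intro a b i k
    have h : φ a * (φ b)ᵀ = φ (a - b) := by
      rw [htr, ← hmul, sub_eq_add_neg]
    calc ∑ c : Fin g, φ a i c * φ b k c = (φ a * (φ b)ᵀ) i k := by
          simp [Matrix.mul_apply]
      _ = φ (a - b) i k := by rw [h]
  -- main computation : B * Bᵀ = M
  have hBBt : B * Bᵀ = M := by
    ext p q
    rw [Matrix.mul_apply]
    have hL : ∑ r, B p r * Bᵀ r q
        = ∑ j : Fin (g * lam), φ (H p.1 j - H q.1 j) p.2 q.2 := by
      rw [Fintype.sum_prod_type]
      refine Finset.sum_congr rfl fun j _ => ?_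
      simp only [Matrix.transpose_apply, hB]
      exact hblock _ _ _ _
    rw [hL]
    by_cases hpq : p.1 = q.1
    · have : ∀ j : Fin (g * lam), φ (H p.1 j - H q.1 j) p.2 q.2
          = if p.2 = q.2 then (1 : ℝ) else 0 := by
        intro j
        rw [hpq, sub_self, hzero, Matrix.one_apply]
      rw [Finset.sum_congr rfl fun j _ => this j, Finset.sum_const, Finset.card_univ,
        Fintype.card_fin]
      have hpq' : (p = q) ↔ (p.2 = q.2) := by
        rw [Prod.ext_iff]
        simp [hpq]
      simp only [hM, Matrix.add_apply, Matrix.smul_apply, Matrix.one_apply,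
        Matrix.sub_apply, Matrix.of_apply, hpq, if_true, smul_eq_mul]
      by_cases h2 : p.2 = q.2
      · rw [if_pos (hpq'.mpr h2), if_pos h2]
        push_cast
        ring
      · have : ¬ p = q := fun h => h2 (by rw [h])
        rw [if_neg this, if_neg h2]
        ring
    · have hfib : ∑ j : Fin (g * lam), φ (H p.1 j - H q.1 j) p.2 q.2
          = ∑ x : G, ∑ j ∈ Finset.univ.filter (fun j => H p.1 j - H q.1 j = x),
              φ (H p.1 j - H q.1 j) p.2 q.2 := by
        exact (Finset.sum_fiberwise_of_maps_to (fun j _ => Finset.mem_univ _) _).symm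
      rw [hfib]
      have : ∀ x : G, ∑ j ∈ Finset.univ.filter (fun j => H p.1 j - H q.1 j = x),
          φ (H p.1 j - H q.1 j) p.2 q.2 = (lam : ℝ) * φ x p.2 q.2 := by
        intro x
        rw [Finset.sum_congr rfl (fun j hj => by
          rw [(Finset.mem_filter.mp hj).2]), Finset.sum_const,
          hGH p.1 q.1 hpq x, nsmul_eq_mul]
      rw [Finset.sum_congr rfl fun x _ => this x, ← Finset.mul_sum, hsumentry]
      have hne : ¬ p = q := fun h => hpq (by rw [h])
      simp [hM, Matrix.one_apply, hpq, hne]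
  -- commutation: M * B = B * M
  have hJB : Matrix.of (fun _ _ : Fin (g * lam) × Fin g => (1 : ℝ)) * B
      = Matrix.of fun _ _ => ((g * lam : ℕ) : ℝ) := by
    ext p q
    rw [Matrix.mul_apply, Fintype.sum_prod_type]
    simp only [Matrix.of_apply, one_mul, hB]
    rw [Finset.sum_congr rfl fun j _ => hcol (H j q.1) q.2]
    simp
  have hBJ : B * Matrix.of (fun _ _ : Fin (g * lam) × Fin g => (1 : ℝ))
      = Matrix.of fun _ _ => ((g * lam : ℕ) : ℝ) := by
    ext p q
    rw [Matrix.mul_apply, Fintype.sum_prod_type]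
    simp only [Matrix.of_apply, mul_one, hB]
    rw [Finset.sum_congr rfl fun j _ => hrow (H p.1 j) p.2]
    simp
  have hKB : (Matrix.of fun p q : Fin (g * lam) × Fin g =>
      if p.1 = q.1 then (1 : ℝ) else 0) * B = Matrix.of fun _ _ => (1 : ℝ) := by
    ext p q
    rw [Matrix.mul_apply, Fintype.sum_prod_type]
    simp only [Matrix.of_apply, hB, ite_mul, one_mul, zero_mul]
    have hinner : ∀ j : Fin (g * lam),
        (∑ c : Fin g, if p.1 = j then φ (H j q.1) c q.2 else 0)
          = if p.1 = j then (1 : ℝ) else 0 := by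
      intro j
      split_ifs with h
      · exact hcol _ _
      · simp
    rw [Finset.sum_congr rfl fun j _ => hinner j, Finset.sum_ite_eq]
    simp
  have hBK : B * (Matrix.of fun p q : Fin (g * lam) × Fin g =>
      if p.1 = q.1 then (1 : ℝ) else 0) = Matrix.of fun _ _ => (1 : ℝ) := by
    ext p q
    rw [Matrix.mul_apply, Fintype.sum_prod_type]
    simp only [Matrix.of_apply, hB, mul_ite, mul_one, mul_zero]
    have hinner : ∀ j : Fin (g * lam),
        (∑ c : Fin g, if j = q.1 then φ (H p.1 j) p.2 c else 0)
          = if j = q.1 then (1 : ℝ) else 0 := by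
      intro j
      split_ifs with h
      · exact hrow _ _
      · simp
    rw [Finset.sum_congr rfl fun j _ => hinner j, Finset.sum_ite_eq']
    simp
  have hcomm : M * B = B * M := by
    rw [hM]
    rw [Matrix.add_mul, Matrix.mul_add, Matrix.smul_mul, Matrix.mul_smul,
      Matrix.one_mul, Matrix.mul_one, Matrix.smul_mul, Matrix.mul_smul,
      Matrix.sub_mul, Matrix.mul_sub, hJB, hBJ, hKB, hBK]
  -- the transpose side
  have hMsymm : Mᵀ = M := by
    rw [← hBBt, Matrix.transpose_mul, Matrix.transpose_transpose]
  set N : Matrix (Fin (g * lam) × Fin g) (Fin (g * lam) × Fin g) ℝ := Bᵀ * B with hN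
  have h1 : N * N = N * M := by
    calc N * N = Bᵀ * ((B * Bᵀ) * B) := by
          rw [hN]; noncomm_ring
      _ = Bᵀ * (B * M) := by rw [hBBt, hcomm]
      _ = N * M := by rw [hN]; noncomm_ring
  have htrNN : Matrix.trace (N * N) = Matrix.trace (M * M) := by
    calc Matrix.trace (N * N) = Matrix.trace (Bᵀ * (B * Bᵀ * B)) := by
          rw [hN]; congr 1; noncomm_ring
      _ = Matrix.trace ((B * Bᵀ * B) * Bᵀ) := Matrix.trace_mul_comm _ _
      _ = Matrix.trace (M * M) := by rw [← hBBt]; congr 1; noncomm_ring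
  set D : Matrix (Fin (g * lam) × Fin g) (Fin (g * lam) × Fin g) ℝ := N - M with hD
  have hDsymm : ∀ i j, D j i = D i j := by
    intro i j
    have h : Dᵀ = D := by
      rw [hD, Matrix.transpose_sub, hMsymm, hN, Matrix.transpose_mul,
        Matrix.transpose_transpose]
    exact congrFun (congrFun h i) j
  have htr0 : Matrix.trace (D * D) = 0 := by
    have hDD : D * D = M * M - M * N := by
      rw [hD, Matrix.sub_mul, Matrix.mul_sub, Matrix.mul_sub, h1]
      abel
    rw [hDD, Matrix.trace_sub]
    have h3 : Matrix.trace (M * N) = Matrix.trace (M * M) := by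
      rw [Matrix.trace_mul_comm, ← h1, htrNN]
    rw [h3, sub_self]
  have hD0 : ∀ i j, D i j = 0 := by
    have hexp : Matrix.trace (D * D) = ∑ i, ∑ j, (D i j) ^ 2 := by
      rw [Matrix.trace]
      simp only [Matrix.diag, Matrix.mul_apply]
      refine Finset.sum_congr rfl fun i _ => Finset.sum_congr rfl fun j _ => ?_
      rw [hDsymm i j, sq]
    rw [hexp] at htr0
    have hkey : ∀ i ∈ Finset.univ, ∀ j ∈ Finset.univ, (D i j) ^ 2 = 0 := by
      have h4 := (Finset.sum_eq_zero_iff_of_nonneg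
        (fun i _ => Finset.sum_nonneg fun j _ => sq_nonneg (D i j))).mp htr0
      intro i _ j hj
      exact (Finset.sum_eq_zero_iff_of_nonneg
        (fun j _ => sq_nonneg (D i j))).mp (h4 i (Finset.mem_univ i)) j hj
    intro i j
    exact pow_eq_zero_iff (by norm_num) |>.mp
      (hkey i (Finset.mem_univ i) j (Finset.mem_univ j))
  have hBtB : Bᵀ * B = M := by
    have : D = 0 := by
      ext i j
      exact hD0 i j
    rw [hD] at this
    rw [sub_eq_zero] at this
    rw [← hN, this]
  exact ⟨hBBt, hBtB⟩
end
end

section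
/- Let H be a GH(g,λ) over an abelian group with rows h₁,…,h_{gλ}, and define the block matrix M with (i,j)-block D_{ij} := φ(h_j)ᵀ φ(h_i), where φ(h_i) denotes the gλ×g²λ block row (φ(h_{i1}),…,φ(h_{i,gλ})) interpreted appropriately as g²λ×g²λ products. Then M Mᵀ = Mᵀ M = g²λ²·I_{g³λ²} + gλ²·(J_{g³λ²} − I_{g²λ²} ⊗ J_g); that is, M is the incidence matrix of a symmetric group divisible design with parameters (g³λ², g²λ², g²λ², g, 0, gλ²). -/
/-!
Let `Φ` be the `g²λ × g²λ` matrix obtained from `H` by replacing each entry `h` with `φ h`.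
Row orthogonality of the generalized Hadamard matrix says `Φ Φᵀ = gλ I + λ (J - I ⊗ J_g)`.
Since the blocks of `Φ` are permutation matrices, `Φ` commutes with `J` and `I ⊗ J_g`,
hence with `Φ Φᵀ`; a real matrix commuting with `A Aᵀ` is normal, so `Φᵀ Φ` is the same
matrix, i.e. the columns of `H` are orthogonal too. Every entry of `M Mᵀ` and of `Mᵀ M` is
`∑ j b, φ ((h_{ja'} - h_{ja}) + (h_{ib} - h_{i'b}))`, which `φ (x + y) = φ x φ y` splits
into a product of an entry of `Φᵀ Φ` with one of `Φ Φᵀ`.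
-/

open Matrix Finset

-- The trace of `(Aᴴ A - A Aᴴ)²` vanishes by cyclicity once `A` commutes with `A Aᴴ`.
theorem Matrix.isStarNormal_of_commute_mul_conjTranspose {n R : Type*} [Fintype n]
    [CommRing R] [PartialOrder R] [StarRing R] [StarOrderedRing R] [NoZeroDivisors R]
    {A : Matrix n n R} (h : Commute A (A * Aᴴ)) : IsStarNormal A := by
  set T := A * Aᴴ
  have hX : (Aᴴ * A * (Aᴴ * A)).trace = (T * T).trace := by
    rw [Matrix.mul_assoc, trace_mul_comm, Matrix.mul_assoc, Matrix.mul_assoc,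
      ← Matrix.mul_assoc A]
  have hXT : (Aᴴ * A * T).trace = (T * T).trace := by
    rw [Matrix.mul_assoc, trace_mul_comm, h.eq, Matrix.mul_assoc]
  have hTX : (T * (Aᴴ * A)).trace = (T * T).trace := by
    rw [trace_mul_comm, hXT]
  set E := Aᴴ * A - T with hE
  have htr : (Eᴴ * E).trace = 0 := by
    have hEh : Eᴴ = E := by simp [hE, T, conjTranspose_sub]
    rw [hEh, hE, sub_mul, mul_sub, mul_sub, trace_sub, trace_sub, trace_sub, hX, hXT, hTX]
    abel
  exact ⟨sub_eq_zero.mp (trace_conjTranspose_mul_self_eq_zero_iff.mp htr)⟩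

structure IsPermRep {G κ : Type*} [AddCommGroup G] [Fintype G] [Fintype κ] [DecidableEq κ]
    (φ : G → Matrix κ κ ℝ) : Prop where
  map_add : ∀ x y, φ (x + y) = φ x * φ y
  transpose_eq : ∀ x, (φ x)ᵀ = φ (-x)
  map_zero : φ 0 = 1
  sum_eq : ∑ x, φ x = of fun _ _ => 1

namespace IsPermRep

variable {G κ : Type*} [AddCommGroup G] [Fintype G] [Fintype κ] [DecidableEq κ]
  {φ : G → Matrix κ κ ℝ}

theorem apply_sub_eq_sum_rows (hφ : IsPermRep φ) (x y : G) (s s' : κ) :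
    φ (x - y) s s' = ∑ t, φ x s t * φ y s' t := by
  rw [sub_eq_add_neg, hφ.map_add, ← hφ.transpose_eq, mul_apply]
  rfl

theorem apply_add (hφ : IsPermRep φ) (x y : G) (s s' : κ) :
    φ (x + y) s s' = ∑ t, φ x s t * φ y t s' := by
  rw [hφ.map_add, mul_apply]

theorem apply_sub_eq_sum_cols (hφ : IsPermRep φ) (x y : G) (s s' : κ) :
    φ (y - x) s s' = ∑ t, φ x t s * φ y t s' := by
  rw [sub_eq_neg_add, hφ.apply_add, ← hφ.transpose_eq]
  rfl

theorem sum_apply (hφ : IsPermRep φ) (s t : κ) : ∑ x, φ x s t = 1 := by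
  simpa [Matrix.sum_apply] using congr_fun₂ hφ.sum_eq s t

-- `φ x` permutes the summands of `∑ y, φ y = J`.
theorem sum_row (hφ : IsPermRep φ) (x : G) (s : κ) : ∑ t, φ x s t = 1 := by
  have h : φ x * (of fun _ _ => 1) = of fun _ _ => 1 := by
    rw [← hφ.sum_eq, Matrix.mul_sum]
    simp_rw [← hφ.map_add]
    exact Fintype.sum_equiv (Equiv.addLeft x) _ _ fun _ => rfl
  simpa [mul_apply] using congr_fun₂ h s s

theorem sum_col (hφ : IsPermRep φ) (x : G) (t : κ) : ∑ s, φ x s t = 1 := by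
  simpa [← hφ.transpose_eq] using hφ.sum_row (-x) t

end IsPermRep

theorem sum_comp_eq_nsmul_sum_of_card_fiber {ι G M : Type*} [Fintype ι] [Fintype G]
    [DecidableEq G] [AddCommMonoid M] {u : ι → G} {lam : ℕ}
    (hu : ∀ x, #{j | u j = x} = lam) (f : G → M) :
    ∑ j, f (u j) = lam • ∑ x, f x := by
  rw [← sum_fiberwise univ u fun j => f (u j), smul_sum]
  refine sum_congr rfl fun x _ => ?_
  rw [sum_congr rfl fun j hj => by rw [(mem_filter.mp hj).2], sum_const, hu]

section GddGram

variable {α β : Type*} [DecidableEq α] [DecidableEq β]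

def blockOnes (f : α → β) : Matrix α α ℝ := of fun p q => if f p = f q then 1 else 0

-- `k I + l (J - I ⊗ J)`: the Gram matrix of a symmetric GDD with `λ₁ = 0` whose groups
-- are the fibres of `f`.
def gddGram (f : α → β) (k l : ℝ) : Matrix α α ℝ :=
  k • 1 + l • (of (fun _ _ => 1) - blockOnes f)

theorem gddGram_apply (f : α → β) (k l : ℝ) (p q : α) :
    gddGram f k l p q = if f p = f q then (if p = q then k else 0) else l := by
  by_cases hpq : p = q
  · simp [gddGram, blockOnes, hpq]
  · by_cases hf : f p = f q <;> simp [gddGram, blockOnes, one_apply, hpq, hf]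

theorem sum_gddGram_mul_gddGram_apply {ι κ : Type*} [DecidableEq ι] [Fintype κ]
    [DecidableEq κ] {k l : ℝ} (hk : k = Fintype.card κ * l) (i i' a a' : ι) (s s' : κ) :
    ∑ w, gddGram Prod.fst k l (a, s) (a', w) * gddGram Prod.fst k l (i, w) (i', s') =
      gddGram (fun P : ι × ι × κ => (P.1, P.2.1)) (k ^ 2) (k * l) (i, a, s) (i', a', s') := by
  subst hk
  simp only [gddGram_apply, Prod.mk.injEq]
  by_cases hi : i = i' <;> by_cases ha : a = a' <;>
    simp [hi, ha, sq, sum_ite_eq, sum_ite_eq', ite_mul, mul_ite] <;> ring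

end GddGram

section PermBlockMatrix

variable {ι κ G : Type*} [Fintype ι] [Fintype κ] [DecidableEq κ]
  [AddCommGroup G] [Fintype G] {φ : G → Matrix κ κ ℝ}

def permBlockMatrix (φ : G → Matrix κ κ ℝ) (H : ι → ι → G) : Matrix (ι × κ) (ι × κ) ℝ :=
  of fun p q => φ (H p.1 q.1) p.2 q.2

variable (H : ι → ι → G)

theorem permBlockMatrix_mul_transpose_apply (hφ : IsPermRep φ) (i i' : ι) (u u' : κ) :
    (permBlockMatrix φ H * (permBlockMatrix φ H)ᵀ) (i, u) (i', u') =
      ∑ c, φ (H i c - H i' c) u u' := by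
  simp [mul_apply, Fintype.sum_prod_type, permBlockMatrix, hφ.apply_sub_eq_sum_rows]

theorem transpose_mul_permBlockMatrix_apply (hφ : IsPermRep φ) (a a' : ι) (s s' : κ) :
    ((permBlockMatrix φ H)ᵀ * permBlockMatrix φ H) (a, s) (a', s') =
      ∑ j, φ (H j a' - H j a) s s' := by
  simp [mul_apply, Fintype.sum_prod_type, permBlockMatrix, hφ.apply_sub_eq_sum_cols]

theorem permBlockMatrix_mul_allOnes (hφ : IsPermRep φ) :
    permBlockMatrix φ H * of (fun _ _ => 1) = (Fintype.card ι : ℝ) • of fun _ _ => 1 := by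
  ext p q
  simp [mul_apply, Fintype.sum_prod_type, permBlockMatrix, hφ.sum_row]

theorem allOnes_mul_permBlockMatrix (hφ : IsPermRep φ) :
    of (fun _ _ => 1) * permBlockMatrix φ H = (Fintype.card ι : ℝ) • of fun _ _ => 1 := by
  ext p q
  simp [mul_apply, Fintype.sum_prod_type, permBlockMatrix, hφ.sum_col]

variable [DecidableEq ι]

theorem permBlockMatrix_mul_blockOnes (hφ : IsPermRep φ) :
    permBlockMatrix φ H * blockOnes Prod.fst = of fun _ _ => 1 := by
  ext p q
  simp [mul_apply, Fintype.sum_prod_type, permBlockMatrix, blockOnes, hφ.sum_row]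

theorem blockOnes_mul_permBlockMatrix (hφ : IsPermRep φ) :
    blockOnes Prod.fst * permBlockMatrix φ H = of fun _ _ => 1 := by
  ext p q
  simp [mul_apply, Fintype.sum_prod_type, permBlockMatrix, blockOnes, hφ.sum_col]

theorem commute_permBlockMatrix_gddGram (hφ : IsPermRep φ) (c d : ℝ) :
    Commute (permBlockMatrix φ H) (gddGram Prod.fst c d) := by
  have hJ : Commute (permBlockMatrix φ H) (of fun _ _ => 1) :=
    (permBlockMatrix_mul_allOnes H hφ).trans (allOnes_mul_permBlockMatrix H hφ).symm
  have hB : Commute (permBlockMatrix φ H) (blockOnes Prod.fst) :=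
    (permBlockMatrix_mul_blockOnes H hφ).trans (blockOnes_mul_permBlockMatrix H hφ).symm
  exact ((Commute.one_right _).smul_right c).add_right ((hJ.sub_right hB).smul_right d)

end PermBlockMatrix

def IsGenHadamard {ι G : Type*} [Fintype ι] [AddCommGroup G] [DecidableEq G]
    (H : ι → ι → G) (lam : ℕ) : Prop :=
  ∀ i k, i ≠ k → ∀ x, #{j | H i j - H k j = x} = lam

section GeneralizedHadamard

variable {ι κ G : Type*} [Fintype ι] [DecidableEq ι] [Fintype κ] [DecidableEq κ]
  [AddCommGroup G] [Fintype G] [DecidableEq G] {φ : G → Matrix κ κ ℝ} {H : ι → ι → G}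
  {lam : ℕ}

theorem permBlockMatrix_mul_transpose (hφ : IsPermRep φ) (hH : IsGenHadamard H lam) :
    permBlockMatrix φ H * (permBlockMatrix φ H)ᵀ = gddGram Prod.fst (Fintype.card ι) lam := by
  ext ⟨i, u⟩ ⟨i', u'⟩
  rw [permBlockMatrix_mul_transpose_apply H hφ, gddGram_apply]
  by_cases hi : i = i'
  · subst hi
    by_cases hu : u = u' <;> simp [hφ.map_zero, one_apply, hu]
  · simp [sum_comp_eq_nsmul_sum_of_card_fiber (hH i i' hi) fun x => φ x u u', hφ.sum_apply,
      hi]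

theorem transpose_mul_permBlockMatrix (hφ : IsPermRep φ) (hH : IsGenHadamard H lam) :
    (permBlockMatrix φ H)ᵀ * permBlockMatrix φ H = gddGram Prod.fst (Fintype.card ι) lam := by
  have hcomm :
      Commute (permBlockMatrix φ H) (permBlockMatrix φ H * (permBlockMatrix φ H)ᴴ) := by
    rw [conjTranspose_eq_transpose_of_trivial, permBlockMatrix_mul_transpose hφ hH]
    exact commute_permBlockMatrix_gddGram H hφ _ _
  have hnormal := (isStarNormal_of_commute_mul_conjTranspose hcomm).star_comm_self.eq
  rwa [star_eq_conjTranspose, conjTranspose_eq_transpose_of_trivial,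
    permBlockMatrix_mul_transpose hφ hH] at hnormal

end GeneralizedHadamard

section DesignMatrix

variable {ι κ G : Type*} [Fintype ι] [Fintype κ] [DecidableEq κ]
  [AddCommGroup G] [Fintype G] {φ : G → Matrix κ κ ℝ} {H : ι → ι → G}

def designMatrix (φ : G → Matrix κ κ ℝ) (H : ι → ι → G) :
    Matrix (ι × ι × κ) (ι × ι × κ) ℝ :=
  of fun P Q => φ (-(H Q.1 P.2.1) + H P.1 Q.2.1) P.2.2 Q.2.2

theorem sum_sum_apply_add_sub (hφ : IsPermRep φ) (i i' a a' : ι) (s s' : κ) :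
    ∑ j, ∑ b, φ (H j a' - H j a + (H i b - H i' b)) s s' =
      ∑ w, ((permBlockMatrix φ H)ᵀ * permBlockMatrix φ H) (a, s) (a', w) *
        (permBlockMatrix φ H * (permBlockMatrix φ H)ᵀ) (i, w) (i', s') := by
  simp_rw [transpose_mul_permBlockMatrix_apply H hφ, permBlockMatrix_mul_transpose_apply H hφ,
    sum_mul_sum, hφ.apply_add]
  exact (sum_congr rfl fun _ _ => sum_comm).trans sum_comm

theorem designMatrix_mul_transpose_apply (hφ : IsPermRep φ) (i i' a a' : ι) (s s' : κ) :
    (designMatrix φ H * (designMatrix φ H)ᵀ) (i, a, s) (i', a', s') =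
      ∑ j, ∑ b, φ (H j a' - H j a + (H i b - H i' b)) s s' := by
  simp only [mul_apply, Fintype.sum_prod_type, designMatrix, transpose_apply, of_apply,
    ← hφ.apply_sub_eq_sum_rows]
  congr! 3
  abel

theorem transpose_mul_designMatrix_apply (hφ : IsPermRep φ) (i i' a a' : ι) (s s' : κ) :
    ((designMatrix φ H)ᵀ * designMatrix φ H) (i, a, s) (i', a', s') =
      ∑ j, ∑ b, φ (H j a' - H j a + (H i b - H i' b)) s s' := by
  simp only [mul_apply, Fintype.sum_prod_type, designMatrix, transpose_apply, of_apply,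
    ← hφ.apply_sub_eq_sum_cols]
  congr! 3
  abel

variable [DecidableEq ι] [DecidableEq G] {lam : ℕ}

theorem designMatrix_mul_transpose (hφ : IsPermRep φ) (hH : IsGenHadamard H lam)
    (hcard : (Fintype.card ι : ℝ) = Fintype.card κ * lam) :
    designMatrix φ H * (designMatrix φ H)ᵀ = gddGram (fun P : ι × ι × κ => (P.1, P.2.1))
      ((Fintype.card ι : ℝ) ^ 2) (Fintype.card ι * lam) := by
  ext ⟨i, a, s⟩ ⟨i', a', s'⟩
  rw [designMatrix_mul_transpose_apply hφ, sum_sum_apply_add_sub hφ,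
    transpose_mul_permBlockMatrix hφ hH, permBlockMatrix_mul_transpose hφ hH,
    sum_gddGram_mul_gddGram_apply hcard]

theorem transpose_mul_designMatrix (hφ : IsPermRep φ) (hH : IsGenHadamard H lam)
    (hcard : (Fintype.card ι : ℝ) = Fintype.card κ * lam) :
    (designMatrix φ H)ᵀ * designMatrix φ H = gddGram (fun P : ι × ι × κ => (P.1, P.2.1))
      ((Fintype.card ι : ℝ) ^ 2) (Fintype.card ι * lam) := by
  ext ⟨i, a, s⟩ ⟨i', a', s'⟩
  rw [transpose_mul_designMatrix_apply hφ, sum_sum_apply_add_sub hφ,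
    transpose_mul_permBlockMatrix hφ hH, permBlockMatrix_mul_transpose hφ hH,
    sum_gddGram_mul_gddGram_apply hcard]

end DesignMatrix

theorem stmt9_general {G : Type*} [AddCommGroup G] [Fintype G] [DecidableEq G]
    (g lam : ℕ)
    (H : Fin (g * lam) → Fin (g * lam) → G)
    (hGH : ∀ i k, i ≠ k → ∀ x : G,
      (Finset.univ.filter fun j => H i j - H k j = x).card = lam)
    (φ : G → Matrix (Fin g) (Fin g) ℝ)
    (hmul : ∀ x y, φ (x + y) = φ x * φ y)
    (htr : ∀ x, (φ x)ᵀ = φ (-x))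
    (hzero : φ 0 = 1)
    (hsum : ∑ x : G, φ x = Matrix.of fun _ _ => (1 : ℝ))
    (M : Matrix (Fin (g * lam) × Fin (g * lam) × Fin g)
      (Fin (g * lam) × Fin (g * lam) × Fin g) ℝ)
    (hM : ∀ P Q, M P Q = φ (-(H Q.1 P.2.1) + H P.1 Q.2.1) P.2.2 Q.2.2) :
    M * Mᵀ =
      ((g : ℝ)^2 * (lam : ℝ)^2) •
        (1 : Matrix (Fin (g * lam) × Fin (g * lam) × Fin g)
          (Fin (g * lam) × Fin (g * lam) × Fin g) ℝ)
      + ((g : ℝ) * (lam : ℝ)^2) •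
        (Matrix.of (fun _ _ : Fin (g * lam) × Fin (g * lam) × Fin g => (1 : ℝ))
          - Matrix.of fun P Q : Fin (g * lam) × Fin (g * lam) × Fin g =>
              if P.1 = Q.1 ∧ P.2.1 = Q.2.1 then (1 : ℝ) else 0) ∧
    Mᵀ * M =
      ((g : ℝ)^2 * (lam : ℝ)^2) •
        (1 : Matrix (Fin (g * lam) × Fin (g * lam) × Fin g)
          (Fin (g * lam) × Fin (g * lam) × Fin g) ℝ)
      + ((g : ℝ) * (lam : ℝ)^2) •
        (Matrix.of (fun _ _ : Fin (g * lam) × Fin (g * lam) × Fin g => (1 : ℝ))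
          - Matrix.of fun P Q : Fin (g * lam) × Fin (g * lam) × Fin g =>
              if P.1 = Q.1 ∧ P.2.1 = Q.2.1 then (1 : ℝ) else 0) := by
  have hφ : IsPermRep φ := ⟨hmul, htr, hzero, hsum⟩
  have hcard : (Fintype.card (Fin (g * lam)) : ℝ) = Fintype.card (Fin g) * lam := by simp
  obtain rfl : M = designMatrix φ H := Matrix.ext hM
  rw [designMatrix_mul_transpose hφ hGH hcard, transpose_mul_designMatrix hφ hGH hcard,
    and_self, gddGram, blockOnes]
  simp only [Prod.mk.injEq, Fintype.card_fin, Nat.cast_mul]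
  rw [mul_pow, mul_assoc, ← sq]

/-- Let `H` be a `GH(g,λ)` over a finite abelian group of order `g` with
permutation representation `φ`, and let `M` be the block matrix of order `g³λ²`
whose `((i,(a,s)),(j,(b,t)))`-entry is `φ(−h_{ja} + h_{ib}) s t` (i.e. the
`(i,j)`-block is `D_{ij} = φ(h_j)ᵀ φ(h_i)`). Then
`M Mᵀ = Mᵀ M = g²λ²·I + gλ²·(J − I_{g²λ²}⊗J_g)`, so `M` is the incidence matrix
of a symmetric group divisible design with parameters `(g³λ², g²λ², g²λ², g, 0, gλ²)`. -/
theorem stmt9 {G : Type*} [AddCommGroup G] [Fintype G] [DecidableEq G]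
    (g lam : ℕ) (hg : Fintype.card G = g) (hlam : 0 < lam)
    (H : Fin (g * lam) → Fin (g * lam) → G)
    (hGH : ∀ i k, i ≠ k → ∀ x : G,
      (Finset.univ.filter fun j => H i j - H k j = x).card = lam)
    (φ : G → Matrix (Fin g) (Fin g) ℝ)
    (h01 : ∀ x i j, φ x i j = 0 ∨ φ x i j = 1)
    (hmul : ∀ x y, φ (x + y) = φ x * φ y)
    (htr : ∀ x, (φ x)ᵀ = φ (-x))
    (hzero : φ 0 = 1)
    (hsum : ∑ x : G, φ x = Matrix.of fun _ _ => (1 : ℝ))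
    (M : Matrix (Fin (g * lam) × Fin (g * lam) × Fin g)
      (Fin (g * lam) × Fin (g * lam) × Fin g) ℝ)
    (hM : ∀ P Q, M P Q = φ (-(H Q.1 P.2.1) + H P.1 Q.2.1) P.2.2 Q.2.2) :
    M * Mᵀ =
      ((g : ℝ)^2 * (lam : ℝ)^2) •
        (1 : Matrix (Fin (g * lam) × Fin (g * lam) × Fin g)
          (Fin (g * lam) × Fin (g * lam) × Fin g) ℝ)
      + ((g : ℝ) * (lam : ℝ)^2) •
        (Matrix.of (fun _ _ : Fin (g * lam) × Fin (g * lam) × Fin g => (1 : ℝ))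
          - Matrix.of fun P Q : Fin (g * lam) × Fin (g * lam) × Fin g =>
              if P.1 = Q.1 ∧ P.2.1 = Q.2.1 then (1 : ℝ) else 0) ∧
    Mᵀ * M =
      ((g : ℝ)^2 * (lam : ℝ)^2) •
        (1 : Matrix (Fin (g * lam) × Fin (g * lam) × Fin g)
          (Fin (g * lam) × Fin (g * lam) × Fin g) ℝ)
      + ((g : ℝ) * (lam : ℝ)^2) •
        (Matrix.of (fun _ _ : Fin (g * lam) × Fin (g * lam) × Fin g => (1 : ℝ))
          - Matrix.of fun P Q : Fin (g * lam) × Fin (g * lam) × Fin g =>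
              if P.1 = Q.1 ∧ P.2.1 = Q.2.1 then (1 : ℝ) else 0) :=
  stmt9_general g lam H hGH φ hmul htr hzero hsum M hM
end

section
/- Let A_{i,j} (i,j ∈ {1,…,f}, i≠j, f ≥ 3) be v×v (0,1)-matrices with A_{i,j}ᵀ = A_{j,i}, satisfying (L1): A_{i,j}A_{i,j}ᵀ = k I_v + λ₁(I_m⊗J_n − I_v) + λ₂(J_v − I_m⊗J_n) for all distinct i,j, and (L2): A_{i,j}A_{j,l} = σ A_{i,l} + τ(J_v − A_{i,l}) for all distinct i,j,l. Then k² = σk + τ(v−k), and (λ₁−λ₂)·A_{i,j}·(I_m⊗J_n) = (λ₁−λ₂)·(I_m⊗J_n)·A_{i,j} = ((σ−τ)² − k + λ₁)·A_{i,j} + ((σ−τ+k)τ − kλ₂)·J_v. -/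
open Matrix

noncomputable section

/-- For a linked system of symmetric group divisible designs (`f ≥ 3`),
`k² = σk + τ(v−k)` and
`(λ₁−λ₂)·A_{i,j}(I_m⊗J_n) = (λ₁−λ₂)·(I_m⊗J_n)A_{i,j}
  = ((σ−τ)²−k+λ₁)·A_{i,j} + ((σ−τ+k)τ−kλ₂)·J_v`. -/
theorem stmt10 (f m n : ℕ) (hf : 3 ≤ f) (hm : 2 ≤ m) (hn : 2 ≤ n)
    (k l1 l2 σ τ : ℝ)
    (A : Fin f → Fin f → Matrix (Fin m × Fin n) (Fin m × Fin n) ℝ)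
    (h01 : ∀ i j, i ≠ j → ∀ p q, A i j p q = 0 ∨ A i j p q = 1)
    (htr : ∀ i j, i ≠ j → (A i j)ᵀ = A j i)
    (hL1 : ∀ i j, i ≠ j → A i j * (A i j)ᵀ =
      k • (1 : Matrix (Fin m × Fin n) (Fin m × Fin n) ℝ)
        + l1 • (Kmat m n - 1) + l2 • (Jmat m n - Kmat m n))
    (hL2 : ∀ i j l, i ≠ j → j ≠ l → i ≠ l →
      A i j * A j l = σ • A i l + τ • (Jmat m n - A i l)) :
    k ^ 2 = σ * k + τ * ((m : ℝ) * n - k) ∧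
    ∀ i j, i ≠ j →
      (l1 - l2) • (A i j * Kmat m n) =
        ((σ - τ) ^ 2 - k + l1) • A i j
          + ((σ - τ + k) * τ - k * l2) • Jmat m n ∧
      (l1 - l2) • (Kmat m n * A i j) =
        ((σ - τ) ^ 2 - k + l1) • A i j
          + ((σ - τ + k) * τ - k * l2) • Jmat m n := by
  have hJsymm : (Jmat m n)ᵀ = Jmat m n := by
    ext p q; simp [Jmat, Matrix.transpose_apply]
  have hKsymm : (Kmat m n)ᵀ = Kmat m n := by
    ext p q
    simp only [Kmat, Matrix.transpose_apply, Matrix.of_apply]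
    by_cases h : p.1 = q.1 <;> simp [h, Ne.symm, eq_comm]
  -- row sums
  have hrow : ∀ i j, i ≠ j → ∀ p, ∑ r, A i j p r = k := by
    intro i j hij p
    have h : (A i j * (A i j)ᵀ) p p =
        (k • (1 : Matrix (Fin m × Fin n) (Fin m × Fin n) ℝ)
          + l1 • (Kmat m n - 1) + l2 • (Jmat m n - Kmat m n)) p p := by
      rw [hL1 i j hij]
    simp only [Matrix.mul_apply, Matrix.transpose_apply, Matrix.add_apply,
      Matrix.smul_apply, Matrix.sub_apply, Matrix.one_apply_eq, Jmat, Kmat,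
      Matrix.of_apply, smul_eq_mul] at h
    norm_num at h
    rw [← h]
    refine Finset.sum_congr rfl fun r _ => ?_
    rcases h01 i j hij p r with h' | h' <;> rw [h'] <;> ring
  have hAJ : ∀ i j, i ≠ j → A i j * Jmat m n = k • Jmat m n := by
    intro i j hij
    ext p q
    simp only [Matrix.mul_apply, Jmat, Matrix.of_apply, mul_one,
      Matrix.smul_apply, smul_eq_mul]
    rw [hrow i j hij p]
  have hJA : ∀ i j, i ≠ j → Jmat m n * A i j = k • Jmat m n := by
    intro i j hij
    have h := congrArg Matrix.transpose (hAJ j i (Ne.symm hij))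
    rwa [Matrix.transpose_mul, hJsymm, htr j i (Ne.symm hij),
      Matrix.transpose_smul, hJsymm] at h
  have hJJ : Jmat m n * Jmat m n = ((m : ℝ) * n) • Jmat m n := by
    ext p q
    simp only [Matrix.mul_apply, Jmat, Matrix.of_apply, mul_one,
      Matrix.smul_apply, smul_eq_mul, Finset.sum_const, Finset.card_univ,
      Fintype.card_prod, Fintype.card_fin, nsmul_eq_mul]
    push_cast; ring
  -- combination lemma
  have comb : ∀ X : Matrix (Fin m × Fin n) (Fin m × Fin n) ℝ,
      σ • X + τ • (Jmat m n - X) = (σ - τ) • X + τ • Jmat m n := by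
    intro X; module
  -- k² identity
  have hfin : (0 : ℕ) < f ∧ 1 < f ∧ 2 < f := by omega
  set i0 : Fin f := ⟨0, by omega⟩
  set j0 : Fin f := ⟨1, by omega⟩
  set l0 : Fin f := ⟨2, by omega⟩
  have hij0 : i0 ≠ j0 := by simp [i0, j0, Fin.ext_iff]
  have hjl0 : j0 ≠ l0 := by simp [j0, l0, Fin.ext_iff]
  have hil0 : i0 ≠ l0 := by simp [i0, l0, Fin.ext_iff]
  have hk2 : k ^ 2 = σ * k + τ * ((m : ℝ) * n - k) := by
    have h := congrArg (· * Jmat m n) (hL2 i0 j0 l0 hij0 hjl0 hil0)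
    rw [Matrix.mul_assoc, hAJ j0 l0 hjl0, mul_smul_comm, hAJ i0 j0 hij0,
      comb, add_mul, smul_mul_assoc, smul_mul_assoc, hAJ i0 l0 hil0, hJJ] at h
    have h2 : (k * k) • Jmat m n =
        ((σ - τ) * k + τ * ((m : ℝ) * n)) • Jmat m n := by
      rw [← smul_smul]; rw [h]; module
    have p0 : Fin m × Fin n := (⟨0, by omega⟩, ⟨0, by omega⟩)
    have h3 : ((k * k) • Jmat m n) p0 p0 =
        (((σ - τ) * k + τ * ((m : ℝ) * n)) • Jmat m n) p0 p0 := by rw [h2]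
    simp only [Matrix.smul_apply, Jmat, Matrix.of_apply, smul_eq_mul, mul_one] at h3
    nlinarith [h3]
  refine ⟨hk2, ?_⟩
  -- main identity for A*K
  have main : ∀ i j, i ≠ j → (l1 - l2) • (A i j * Kmat m n) =
      ((σ - τ) ^ 2 - k + l1) • A i j
        + ((σ - τ + k) * τ - k * l2) • Jmat m n := by
    intro i j hij
    obtain ⟨l, hli, hlj⟩ : ∃ l : Fin f, l ≠ i ∧ l ≠ j := by
      by_contra h
      push_neg at h
      have hsub : (Finset.univ : Finset (Fin f)) ⊆ {i, j} := by
        intro x _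
        rcases eq_or_ne x i with h' | h'
        · simp [h']
        · simp [h x h']
      have := Finset.card_le_card hsub
      simp only [Finset.card_univ, Fintype.card_fin] at this
      have : f ≤ 2 := le_trans this (Finset.card_insert_le _ _ |>.trans (by simp))
      omega
    have hL2a : A i j * A j l = (σ - τ) • A i l + τ • Jmat m n := by
      rw [hL2 i j l hij (Ne.symm hlj) (Ne.symm hli), comb]
    have hL2b : A i l * A l j = (σ - τ) • A i j + τ • Jmat m n := by
      rw [hL2 i l j (Ne.symm hli) hlj hij, comb]
    have hL1b : A j l * A l j =
        k • (1 : Matrix (Fin m × Fin n) (Fin m × Fin n) ℝ)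
          + l1 • (Kmat m n - 1) + l2 • (Jmat m n - Kmat m n) := by
      rw [← htr j l (Ne.symm hlj)]; exact hL1 j l (Ne.symm hlj)
    have way1 : (A i j * A j l) * A l j =
        (σ - τ) • ((σ - τ) • A i j + τ • Jmat m n) + τ • (k • Jmat m n) := by
      rw [hL2a, add_mul, smul_mul_assoc, smul_mul_assoc, hL2b, hJA l j hlj]
    have way2 : (A i j * A j l) * A l j =
        (k - l1) • A i j + (l1 - l2) • (A i j * Kmat m n)
          + (l2 * k) • Jmat m n := by
      rw [Matrix.mul_assoc, hL1b, mul_add, mul_add, mul_smul_comm,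
        mul_smul_comm, mul_smul_comm, Matrix.mul_one, Matrix.mul_sub,
        Matrix.mul_sub, Matrix.mul_one, hAJ i j hij]
      module
    have key := way1.symm.trans way2
    linear_combination (norm := module) -key
  intro i j hij
  refine ⟨main i j hij, ?_⟩
  have h := congrArg Matrix.transpose (main j i (Ne.symm hij))
  rw [Matrix.transpose_smul, Matrix.transpose_mul, hKsymm, htr j i (Ne.symm hij)] at h
  rw [h]
  rw [Matrix.transpose_add, Matrix.transpose_smul, Matrix.transpose_smul,
    htr j i (Ne.symm hij), hJsymm]

end
end

section
/- Let A_{i,j} (i,j ∈ {1,…,f}, i≠j) be a linked system of symmetric group divisible designs with parameters (v,k,m,n,λ₁,λ₂) and linking parameters σ, τ. Then the complements A'_{i,j} := J_v − A_{i,j} form a linked system of symmetric group divisible designs with parameters (v, v−k, m, n, v−2k+λ₁, v−2k+λ₂) and linking parameters σ' = v−2k+τ, τ' = v−2k+σ; in particular A'_{i,j}A'_{j,l} = (v−2k+τ)A'_{i,l} + (v−2k+σ)(J_v − A'_{i,l}) for distinct i,j,l. -/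
open Matrix

noncomputable section

/-
Everything reduces to the identity `(J − A)(J − B) = (v − 2k)J + AB`, valid whenever
`J² = vJ` and `AJ = JB = kJ`. The latter hold for the blocks of a linked system: a
`(0,1)`-matrix has `(AAᵀ)_{pp}` equal to its `p`-th row sum, so (L1) makes every row sum `k`,
and `Aᵢⱼᵀ = Aⱼᵢ` turns row sums into column sums. Substituting (L1), (L2) and
`J = I + (I_m ⊗ J_n − I) + (J − I_m ⊗ J_n)` gives the new parameters.
-/

theorem sub_mul_sub_of_mul_eq_smul {S α : Type*} [CommRing S] [Ring α] [Module S α]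
    {J A B : α} {v k : S}
    (hJJ : J * J = v • J) (hAJ : A * J = k • J) (hJB : J * B = k • J) :
    (J - A) * (J - B) = (v - 2 * k) • J + A * B := by
  rw [sub_mul, mul_sub, mul_sub, hJJ, hAJ, hJB]
  module

theorem mul_transpose_apply_self_of_zero_one {ι R : Type*} [Fintype ι] [NonAssocSemiring R]
    {A : Matrix ι ι R} (h01 : ∀ p q, A p q = 0 ∨ A p q = 1) (p : ι) :
    (A * Aᵀ) p p = ∑ q, A p q := by
  refine Finset.sum_congr rfl fun q _ => ?_
  rcases h01 p q with h | h <;> simp [h]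

section Jmat

variable {m n : ℕ}

@[simp]
theorem Jmat_apply (p q : Fin m × Fin n) : Jmat m n p q = 1 := rfl

@[simp]
theorem Jmat_transpose : (Jmat m n)ᵀ = Jmat m n := rfl

theorem Jmat_mul_Jmat : Jmat m n * Jmat m n = ((m : ℝ) * n) • Jmat m n := by
  ext p q
  simp [mul_apply]

theorem mul_Jmat_eq_smul_of_row_sum {A : Matrix (Fin m × Fin n) (Fin m × Fin n) ℝ} {k : ℝ}
    (hrow : ∀ p, ∑ q, A p q = k) : A * Jmat m n = k • Jmat m n := by
  ext p q
  simp [mul_apply, hrow p]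

theorem Jmat_mul_transpose_eq_smul {A : Matrix (Fin m × Fin n) (Fin m × Fin n) ℝ} {k : ℝ}
    (hAJ : A * Jmat m n = k • Jmat m n) : Jmat m n * Aᵀ = k • Jmat m n := by
  rw [← Jmat_transpose, ← transpose_mul, hAJ, transpose_smul, Jmat_transpose]

theorem mul_Jmat_eq_smul_of_zero_one {A : Matrix (Fin m × Fin n) (Fin m × Fin n) ℝ}
    {k l1 l2 : ℝ} (h01 : ∀ p q, A p q = 0 ∨ A p q = 1)
    (hAAt : A * Aᵀ = k • (1 : Matrix (Fin m × Fin n) (Fin m × Fin n) ℝ)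
      + l1 • (Kmat m n - 1) + l2 • (Jmat m n - Kmat m n)) :
    A * Jmat m n = k • Jmat m n := by
  refine mul_Jmat_eq_smul_of_row_sum fun p => ?_
  rw [← mul_transpose_apply_self_of_zero_one h01, hAAt]
  simp [Kmat]

end Jmat

theorem stmt13_general (f m n : ℕ)
    (k l1 l2 σ τ : ℝ)
    (A : Fin f → Fin f → Matrix (Fin m × Fin n) (Fin m × Fin n) ℝ)
    (h01 : ∀ i j, i ≠ j → ∀ p q, A i j p q = 0 ∨ A i j p q = 1)
    (htr : ∀ i j, i ≠ j → (A i j)ᵀ = A j i)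
    (hL1 : ∀ i j, i ≠ j → A i j * (A i j)ᵀ =
      k • (1 : Matrix (Fin m × Fin n) (Fin m × Fin n) ℝ)
        + l1 • (Kmat m n - 1) + l2 • (Jmat m n - Kmat m n))
    (hL2 : ∀ i j l, i ≠ j → j ≠ l → i ≠ l →
      A i j * A j l = σ • A i l + τ • (Jmat m n - A i l)) :
    (∀ i j, i ≠ j → ∀ p q,
      (Jmat m n - A i j) p q = 0 ∨ (Jmat m n - A i j) p q = 1) ∧
    (∀ i j, i ≠ j → (Jmat m n - A i j)ᵀ = Jmat m n - A j i) ∧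
    (∀ i j, i ≠ j → (Jmat m n - A i j) * (Jmat m n - A i j)ᵀ =
      ((m : ℝ) * n - k) • (1 : Matrix (Fin m × Fin n) (Fin m × Fin n) ℝ)
        + ((m : ℝ) * n - 2 * k + l1) • (Kmat m n - 1)
        + ((m : ℝ) * n - 2 * k + l2) • (Jmat m n - Kmat m n)) ∧
    (∀ i j l, i ≠ j → j ≠ l → i ≠ l →
      (Jmat m n - A i j) * (Jmat m n - A j l) =
        ((m : ℝ) * n - 2 * k + τ) • (Jmat m n - A i l)
          + ((m : ℝ) * n - 2 * k + σ) • (Jmat m n - (Jmat m n - A i l))) := by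
  have hAJ : ∀ i j, i ≠ j → A i j * Jmat m n = k • Jmat m n := fun i j hij =>
    mul_Jmat_eq_smul_of_zero_one (h01 i j hij) (hL1 i j hij)
  have hJA : ∀ i j, i ≠ j → Jmat m n * A i j = k • Jmat m n := fun i j hij => by
    rw [← htr j i hij.symm]
    exact Jmat_mul_transpose_eq_smul (hAJ j i hij.symm)
  refine ⟨fun i j hij p q => ?_, fun i j hij => ?_, fun i j hij => ?_,
    fun i j l hij hjl hil => ?_⟩
  · rcases h01 i j hij p q with h | h <;> simp [h]
  · rw [transpose_sub, Jmat_transpose, htr i j hij]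
  · rw [transpose_sub, Jmat_transpose, sub_mul_sub_of_mul_eq_smul Jmat_mul_Jmat (hAJ i j hij)
      (Jmat_mul_transpose_eq_smul (hAJ i j hij)), hL1 i j hij]
    module
  · rw [sub_mul_sub_of_mul_eq_smul Jmat_mul_Jmat (hAJ i j hij) (hJA j l hjl),
      hL2 i j l hij hjl hil]
    module

/-- The complements `A'_{i,j} = J_v − A_{i,j}` of a linked system of symmetric
group divisible designs with parameters `(v,k,m,n,λ₁,λ₂)` and linking
parameters `σ, τ` form a linked system of symmetric group divisible designs with
parameters `(v, v−k, m, n, v−2k+λ₁, v−2k+λ₂)` and linking parameters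
`σ' = v−2k+τ`, `τ' = v−2k+σ`. -/
theorem stmt13 (f m n : ℕ) (hm : 2 ≤ m) (hn : 2 ≤ n)
    (k l1 l2 σ τ : ℝ) (hk0 : 0 < k) (hkv : k < (m : ℝ) * n)
    (A : Fin f → Fin f → Matrix (Fin m × Fin n) (Fin m × Fin n) ℝ)
    (h01 : ∀ i j, i ≠ j → ∀ p q, A i j p q = 0 ∨ A i j p q = 1)
    (htr : ∀ i j, i ≠ j → (A i j)ᵀ = A j i)
    (hL1 : ∀ i j, i ≠ j → A i j * (A i j)ᵀ =
      k • (1 : Matrix (Fin m × Fin n) (Fin m × Fin n) ℝ)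
        + l1 • (Kmat m n - 1) + l2 • (Jmat m n - Kmat m n))
    (hL2 : ∀ i j l, i ≠ j → j ≠ l → i ≠ l →
      A i j * A j l = σ • A i l + τ • (Jmat m n - A i l)) :
    (∀ i j, i ≠ j → ∀ p q,
      (Jmat m n - A i j) p q = 0 ∨ (Jmat m n - A i j) p q = 1) ∧
    (∀ i j, i ≠ j → (Jmat m n - A i j)ᵀ = Jmat m n - A j i) ∧
    (∀ i j, i ≠ j → (Jmat m n - A i j) * (Jmat m n - A i j)ᵀ =
      ((m : ℝ) * n - k) • (1 : Matrix (Fin m × Fin n) (Fin m × Fin n) ℝ)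
        + ((m : ℝ) * n - 2 * k + l1) • (Kmat m n - 1)
        + ((m : ℝ) * n - 2 * k + l2) • (Jmat m n - Kmat m n)) ∧
    (∀ i j l, i ≠ j → j ≠ l → i ≠ l →
      (Jmat m n - A i j) * (Jmat m n - A j l) =
        ((m : ℝ) * n - 2 * k + τ) • (Jmat m n - A i l)
          + ((m : ℝ) * n - 2 * k + σ) • (Jmat m n - (Jmat m n - A i l))) :=
  stmt13_general f m n k l1 l2 σ τ A h01 htr hL1 hL2

end
end

section
/- Let C₁,…,C_l be mn×mn (0,1)-matrices such that: (i) Σ_{a=1}^l C_a = k I_{mn} + λ₁(I_m⊗J_n − I_{mn}) + λ₂(J_{mn} − I_m⊗J_n); (ii) C_aC_aᵀ = α·C_a for all a; (iii) C_aC_bᵀ = β·J_{mn} for all a ≠ b. Let L be a Latin square on {1,…,l} with entries l'(i,j), and let L̃ be the block matrix of order lmn with (i,j)-block C_{l'(i,j)}. Then L̃L̃ᵀ = αk·I_{lmn} + αλ₁·(I_{lm}⊗J_n − I_{lmn}) + αλ₂·(I_l⊗J_{mn} − I_{lm}⊗J_n) + βl·(J_l−I_l)⊗J_{mn}. In particular,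 if αλ₂ = βl then L̃ is the incidence matrix of a symmetric group divisible design with parameters (lmn, αk, lm, n, αλ₁, βl). -/
open Matrix

noncomputable section

/-- The all-ones matrix `J_{lmn}` (indexed by `Fin l × Fin m × Fin n`). -/
def Jbig (l m n : ℕ) : Matrix (Fin l × Fin m × Fin n) (Fin l × Fin m × Fin n) ℝ :=
  Matrix.of fun _ _ => 1

/-- The block-diagonal matrix `I_{lm} ⊗ J_n`. -/
def K1 (l m n : ℕ) : Matrix (Fin l × Fin m × Fin n) (Fin l × Fin m × Fin n) ℝ :=
  Matrix.of fun P Q => if P.1 = Q.1 ∧ P.2.1 = Q.2.1 then 1 else 0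

/-- The block-diagonal matrix `I_l ⊗ J_{mn}`. -/
def K2 (l m n : ℕ) : Matrix (Fin l × Fin m × Fin n) (Fin l × Fin m × Fin n) ℝ :=
  Matrix.of fun P Q => if P.1 = Q.1 then 1 else 0

theorem aux16 (l m n : ℕ)
    (k l1 l2 α β : ℝ)
    (C : Fin l → Matrix (Fin m × Fin n) (Fin m × Fin n) ℝ)
    (hsum : ∑ a, C a =
      k • (1 : Matrix (Fin m × Fin n) (Fin m × Fin n) ℝ)
        + l1 • (Kmat m n - 1) + l2 • (Jmat m n - Kmat m n))
    (hCC : ∀ a, C a * (C a)ᵀ = α • C a)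
    (hCC' : ∀ a b, a ≠ b → C a * (C b)ᵀ = β • Jmat m n)
    (L : Fin l → Fin l → Fin l)
    (hrow : ∀ i, Function.Bijective (L i))
    (hcol : ∀ j, Function.Injective fun i => L i j)
    (Lt : Matrix (Fin l × Fin m × Fin n) (Fin l × Fin m × Fin n) ℝ)
    (hLt : ∀ P Q, Lt P Q = C (L P.1 Q.1) P.2 Q.2) :
    Lt * Ltᵀ =
      (α * k) • (1 : Matrix (Fin l × Fin m × Fin n) (Fin l × Fin m × Fin n) ℝ)
        + (α * l1) • (K1 l m n - 1) + (α * l2) • (K2 l m n - K1 l m n)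
        + (β * l) • (Jbig l m n - K2 l m n) := by
  have hs0 : ∀ p q : Fin m × Fin n, (∑ a, C a p q) =
      k * (if p = q then (1:ℝ) else 0)
        + l1 * ((if p.1 = q.1 then (1:ℝ) else 0) - (if p = q then 1 else 0))
        + l2 * (1 - if p.1 = q.1 then (1:ℝ) else 0) := by
    intro p q
    have h := congrFun (congrFun hsum p) q
    simpa [Matrix.sum_apply, Matrix.one_apply, Kmat, Jmat, Matrix.add_apply,
      Matrix.sub_apply, Matrix.smul_apply, smul_eq_mul] using h
  ext P Q
  have hblock : ∀ j : Fin l,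
      (∑ q : Fin m × Fin n, C (L P.1 j) P.2 q * C (L Q.1 j) Q.2 q)
        = (C (L P.1 j) * (C (L Q.1 j))ᵀ) P.2 Q.2 := by
    intro j
    simp [Matrix.mul_apply, Matrix.transpose_apply]
  have hLHS : (Lt * Ltᵀ) P Q
      = ∑ j : Fin l, (C (L P.1 j) * (C (L Q.1 j))ᵀ) P.2 Q.2 := by
    rw [Matrix.mul_apply]
    rw [show (Finset.univ : Finset (Fin l × Fin m × Fin n)) = Finset.univ ×ˢ Finset.univ from rfl]
    rw [Finset.sum_product]
    refine Finset.sum_congr rfl fun j _ => ?_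
    rw [← hblock j]
    refine Finset.sum_congr rfl fun q _ => ?_
    simp [hLt, Matrix.transpose_apply]
  by_cases hPQ : P.1 = Q.1
  · have hLHS2 : (Lt * Ltᵀ) P Q = α * ∑ a : Fin l, C a P.2 Q.2 := by
      rw [hLHS]
      have : ∀ j : Fin l, (C (L P.1 j) * (C (L Q.1 j))ᵀ) P.2 Q.2
          = α * C (L P.1 j) P.2 Q.2 := by
        intro j
        rw [hPQ] at *
        rw [hCC (L Q.1 j)]
        simp [Matrix.smul_apply, smul_eq_mul, hPQ]
      rw [Finset.sum_congr rfl fun j _ => this j, ← Finset.mul_sum]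
      congr 1
      exact Fintype.sum_bijective (L P.1) (hrow P.1) _ _ (fun j => rfl)
    rw [hLHS2, hs0]
    by_cases h2 : P.2 = Q.2
    · have hPQ' : P = Q := Prod.ext hPQ h2
      simp [hPQ', Matrix.add_apply, Matrix.sub_apply, Matrix.smul_apply,
        Matrix.one_apply, K1, K2, Jbig, smul_eq_mul]
    · have hPQ' : P ≠ Q := fun h => h2 (congrArg Prod.snd h)
      by_cases h3 : P.2.1 = Q.2.1
      · simp [hPQ', h2, hPQ, h3, Matrix.add_apply, Matrix.sub_apply, Matrix.smul_apply,
          Matrix.one_apply, K1, K2, Jbig, smul_eq_mul]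
      · simp [hPQ', h2, hPQ, h3, Matrix.add_apply, Matrix.sub_apply, Matrix.smul_apply,
          Matrix.one_apply, K1, K2, Jbig, smul_eq_mul]
  · have hne : ∀ j : Fin l, L P.1 j ≠ L Q.1 j := by
      intro j h
      exact hPQ (hcol j h)
    have hLHS2 : (Lt * Ltᵀ) P Q = β * l := by
      rw [hLHS]
      have : ∀ j : Fin l, (C (L P.1 j) * (C (L Q.1 j))ᵀ) P.2 Q.2 = β := by
        intro j
        rw [hCC' _ _ (hne j)]
        simp [Matrix.smul_apply, Jmat, smul_eq_mul]
      rw [Finset.sum_congr rfl fun j _ => this j]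
      simp [mul_comm]
    rw [hLHS2]
    have hPQ' : P ≠ Q := fun h => hPQ (congrArg Prod.fst h)
    simp [hPQ', hPQ, Matrix.add_apply, Matrix.sub_apply, Matrix.smul_apply,
      Matrix.one_apply, K1, K2, Jbig, smul_eq_mul]

/-- Plugging matrices `C₁,…,C_l` (with `ΣC_a = kI + λ₁(I_m⊗J_n − I) + λ₂(J − I_m⊗J_n)`,
`C_aC_aᵀ = αC_a`, `C_aC_bᵀ = βJ` for `a ≠ b`) into a Latin square `L` of order `l`
gives `L̃L̃ᵀ = αk·I + αλ₁·(I_{lm}⊗J_n − I) + αλ₂·(I_l⊗J_{mn} − I_{lm}⊗J_n)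
+ βl·(J − I_l⊗J_{mn})`; in particular if `αλ₂ = βl` then `L̃` is the incidence
matrix of a symmetric GDD with parameters `(lmn, αk, lm, n, αλ₁, βl)`. -/
theorem stmt16 (l m n : ℕ) (hl : 0 < l) (hm : 2 ≤ m) (hn : 2 ≤ n)
    (k l1 l2 α β : ℝ)
    (C : Fin l → Matrix (Fin m × Fin n) (Fin m × Fin n) ℝ)
    (h01 : ∀ a p q, C a p q = 0 ∨ C a p q = 1)
    (hsum : ∑ a, C a =
      k • (1 : Matrix (Fin m × Fin n) (Fin m × Fin n) ℝ)
        + l1 • (Kmat m n - 1) + l2 • (Jmat m n - Kmat m n))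
    (hCC : ∀ a, C a * (C a)ᵀ = α • C a)
    (hCC' : ∀ a b, a ≠ b → C a * (C b)ᵀ = β • Jmat m n)
    (L : Fin l → Fin l → Fin l)
    (hLatin : (∀ i, Function.Bijective (L i)) ∧
      (∀ j, Function.Bijective fun i => L i j))
    (Lt : Matrix (Fin l × Fin m × Fin n) (Fin l × Fin m × Fin n) ℝ)
    (hLt : ∀ P Q, Lt P Q = C (L P.1 Q.1) P.2 Q.2) :
    Lt * Ltᵀ =
      (α * k) • (1 : Matrix (Fin l × Fin m × Fin n) (Fin l × Fin m × Fin n) ℝ)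
        + (α * l1) • (K1 l m n - 1) + (α * l2) • (K2 l m n - K1 l m n)
        + (β * l) • (Jbig l m n - K2 l m n) ∧
    (α * l2 = β * l →
      (Lt * Ltᵀ =
        (α * k) • (1 : Matrix (Fin l × Fin m × Fin n) (Fin l × Fin m × Fin n) ℝ)
          + (α * l1) • (K1 l m n - 1) + (β * l) • (Jbig l m n - K1 l m n) ∧
       Ltᵀ * Lt =
        (α * k) • (1 : Matrix (Fin l × Fin m × Fin n) (Fin l × Fin m × Fin n) ℝ)
          + (α * l1) • (K1 l m n - 1) + (β * l) • (Jbig l m n - K1 l m n))) := by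
  have hcol : ∀ j, Function.Injective fun i => L i j := fun j => (hLatin.2 j).injective
  have hfirst := aux16 l m n k l1 l2 α β C hsum hCC hCC' L hLatin.1 hcol Lt hLt
  refine ⟨hfirst, fun hab => ?_⟩
  have hcomb :
      (α * k) • (1 : Matrix (Fin l × Fin m × Fin n) (Fin l × Fin m × Fin n) ℝ)
        + (α * l1) • (K1 l m n - 1) + (α * l2) • (K2 l m n - K1 l m n)
        + (β * l) • (Jbig l m n - K2 l m n)
      = (α * k) • (1 : Matrix (Fin l × Fin m × Fin n) (Fin l × Fin m × Fin n) ℝ)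
          + (α * l1) • (K1 l m n - 1) + (β * l) • (Jbig l m n - K1 l m n) := by
    rw [hab, add_assoc, ← smul_add]
    congr 2
    abel
  refine ⟨hcomb ▸ hfirst, ?_⟩
  by_cases hα : α = 0
  · -- then every C a is zero, and β = 0
    have hC0 : ∀ a, C a = 0 := by
      intro a
      ext p q
      have h := congrFun (congrFun (hCC a) p) p
      rw [Matrix.mul_apply] at h
      simp only [Matrix.transpose_apply, hα, zero_smul, Matrix.zero_apply] at h
      have hz : ∀ r ∈ (Finset.univ : Finset (Fin m × Fin n)),
          C a p r * C a p r = 0 := by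
        refine (Finset.sum_eq_zero_iff_of_nonneg fun r _ => mul_self_nonneg _).mp h
      have := hz q (Finset.mem_univ q)
      simpa [mul_self_eq_zero] using this
    have hβ : β = 0 := by
      have h0 : β * (l:ℝ) = 0 := by rw [← hab, hα, zero_mul]
      have hl' : (l:ℝ) ≠ 0 := Nat.cast_ne_zero.mpr hl.ne'
      rcases mul_eq_zero.mp h0 with h | h
      · exact h
      · exact absurd h hl'
    have hLt0 : Lt = 0 := by
      ext P Q; simp [hLt, hC0]
    simp [hLt0, hα, hβ]
  · -- C a symmetric since α • C a = C a * (C a)ᵀ is symmetric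
    have hCsym : ∀ a, (C a)ᵀ = C a := by
      intro a
      have h : α • (C a)ᵀ = α • C a := by
        rw [← Matrix.transpose_smul, ← hCC a, Matrix.transpose_mul,
          Matrix.transpose_transpose, hCC a]
      exact smul_right_injective _ hα h
    set L' : Fin l → Fin l → Fin l := fun i j => L j i with hL'
    have hrow' : ∀ i, Function.Bijective (L' i) := fun i => hLatin.2 i
    have hcol' : ∀ j, Function.Injective fun i => L' i j :=
      fun j => (hLatin.1 j).injective
    have hLt' : ∀ P Q, Ltᵀ P Q = C (L' P.1 Q.1) P.2 Q.2 := by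
      intro P Q
      rw [Matrix.transpose_apply, hLt]
      conv_lhs => rw [← hCsym (L Q.1 P.1)]
      rw [Matrix.transpose_apply]
    have h2 := aux16 l m n k l1 l2 α β C hsum hCC hCC' L' hrow' hcol' Ltᵀ hLt'
    rw [Matrix.transpose_transpose] at h2
    exact hcomb ▸ h2

end
end

section
/- Let C₁,…,C_l be mn×mn (0,1)-matrices with C_aC_aᵀ = α·C_a for all a and C_aC_bᵀ = β·J_{mn} for a ≠ b. Let M₁, M₂ be UFS Latin squares on {1,…,l}, with entries l(i,j) and l'(i,j), and let M̃₁, M̃₂ be the block matrices of order lmn replacing each symbol s by C_s. Let M_{1,2} be the UFS-composed Latin square of (M₁,M₂) and M̃_{1,2} its blow-up. Then M̃₁M̃₂ᵀ = (α + (l−1)β)·M̃_{1,2} + (l−1)β·(J_{lmn} − M̃_{1,2}). -/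
open Matrix

noncomputable section

/-- For matrices `C₁,…,C_l` with `C_aC_aᵀ = αC_a` and `C_aC_bᵀ = βJ` (`a ≠ b`),
and UFS Latin squares `M₁, M₂` with UFS composition `M₁₂`, the blow-ups satisfy
`M̃₁M̃₂ᵀ = (α+(l−1)β)·M̃₁₂ + (l−1)β·(J − M̃₁₂)`. -/
theorem stmt17 (l m n : ℕ) (hl : 0 < l) (hm : 2 ≤ m) (hn : 2 ≤ n)
    (α β : ℝ)
    (C : Fin l → Matrix (Fin m × Fin n) (Fin m × Fin n) ℝ)
    (h01 : ∀ a p q, C a p q = 0 ∨ C a p q = 1)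
    (hCC : ∀ a, C a * (C a)ᵀ = α • C a)
    (hCC' : ∀ a b, a ≠ b → C a * (C b)ᵀ = β • Jmat m n)
    (M1 M2 M12 : Fin l → Fin l → Fin l)
    (hLatin1 : (∀ i, Function.Bijective (M1 i)) ∧
      (∀ j, Function.Bijective fun i => M1 i j))
    (hLatin2 : (∀ i, Function.Bijective (M2 i)) ∧
      (∀ j, Function.Bijective fun i => M2 i j))
    (hUFS : ∀ i j, ∃! a, M1 i a = M2 j a)
    (hcomp : ∀ i j, ∃ a, M1 i a = M2 j a ∧ M12 i j = M1 i a)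
    (Mt1 Mt2 Mt12 :
      Matrix (Fin l × Fin m × Fin n) (Fin l × Fin m × Fin n) ℝ)
    (hMt1 : ∀ P Q, Mt1 P Q = C (M1 P.1 Q.1) P.2 Q.2)
    (hMt2 : ∀ P Q, Mt2 P Q = C (M2 P.1 Q.1) P.2 Q.2)
    (hMt12 : ∀ P Q, Mt12 P Q = C (M12 P.1 Q.1) P.2 Q.2) :
    Mt1 * Mt2ᵀ =
      (α + ((l : ℝ) - 1) * β) • Mt12
        + (((l : ℝ) - 1) * β) • (Jbig l m n - Mt12) := by
  ext P Q
  obtain ⟨P1, P2⟩ := P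
  obtain ⟨Q1, Q2⟩ := Q
  obtain ⟨a0, ha0, huniq⟩ := hUFS P1 Q1
  obtain ⟨a1, ha1, h12⟩ := hcomp P1 Q1
  have ha1a0 : a1 = a0 := huniq a1 ha1
  -- LHS computation
  have key : (Mt1 * Mt2ᵀ) (P1, P2) (Q1, Q2)
      = ∑ a : Fin l, (C (M1 P1 a) * (C (M2 Q1 a))ᵀ) P2 Q2 := by
    rw [Matrix.mul_apply]
    rw [Fintype.sum_prod_type]
    refine Finset.sum_congr rfl fun a _ => ?_
    rw [Matrix.mul_apply]
    refine Finset.sum_congr rfl fun y _ => ?_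
    rw [hMt1, Matrix.transpose_apply, hMt2]
    rfl
  have hsplit : ∑ a : Fin l, (C (M1 P1 a) * (C (M2 Q1 a))ᵀ) P2 Q2
      = α * C (M1 P1 a0) P2 Q2 + ((l : ℝ) - 1) * β := by
    rw [← Finset.add_sum_erase _ _ (Finset.mem_univ a0)]
    congr 1
    · rw [ha0, hCC]; simp [Matrix.smul_apply]
    · have : ∀ a ∈ Finset.univ.erase a0,
          (C (M1 P1 a) * (C (M2 Q1 a))ᵀ) P2 Q2 = β := by
        intro a ha
        have hne : M1 P1 a ≠ M2 Q1 a := fun h => (Finset.mem_erase.mp ha).1 (huniq a h)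
        rw [hCC' _ _ hne]
        simp [Matrix.smul_apply, Jmat]
      rw [Finset.sum_congr rfl this, Finset.sum_const, nsmul_eq_mul]
      congr 1
      rw [Finset.card_erase_of_mem (Finset.mem_univ a0), Finset.card_univ,
        Fintype.card_fin]
      push_cast [Nat.cast_sub hl]
      ring
  rw [key, hsplit]
  have hM12 : Mt12 (P1, P2) (Q1, Q2) = C (M1 P1 a0) P2 Q2 := by
    rw [hMt12]; simp [h12, ha1a0]
  simp only [Matrix.add_apply, Matrix.smul_apply, Matrix.sub_apply, hM12, Jbig,
    Matrix.of_apply, smul_eq_mul]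
  ring

end
end

section
/- Let H be a GH(g,1) over an abelian group G of order g with permutation representation φ, and set C_k = (φ(−h_{ki}+h_{kj}))_{i,j=1}^g for k ∈ {1,…,g}, and C₀ = I_g ⊗ J_g. Then: (i) Σ_{k=0}^g C_k = g·I_{g²} + J_{g²}; (ii) C_kC_kᵀ = g·C_k for all k ∈ {0,1,…,g}; (iii) C_kC_{k'}ᵀ = J_{g²} for all distinct k, k' ∈ {0,1,…,g}. -/
open Matrix

noncomputable section

/-- For a generalized Hadamard matrix `GH(g,1)` over a finite abelian group `G`
of order `g` with permutation representation `φ`, the matrices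
`C_k = (φ(−h_{ki}+h_{kj}))_{i,j}` (`k = 1,…,g`) together with `C₀ = I_g ⊗ J_g`
satisfy: (i) `Σ_{k=0}^g C_k = g·I + J`; (ii) `C_kC_kᵀ = g·C_k`;
(iii) `C_kC_{k'}ᵀ = J` for distinct `k, k'`. -/
theorem stmt18 {G : Type*} [AddCommGroup G] [Fintype G] [DecidableEq G]
    (g : ℕ) (hg : Fintype.card G = g)
    (H : Fin g → Fin g → G)
    (hGH : ∀ i k, i ≠ k → Function.Bijective fun j => H i j - H k j)
    (φ : G → Matrix (Fin g) (Fin g) ℝ)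
    (h01 : ∀ x i j, φ x i j = 0 ∨ φ x i j = 1)
    (hmul : ∀ x y, φ (x + y) = φ x * φ y)
    (htr : ∀ x, (φ x)ᵀ = φ (-x))
    (hzero : φ 0 = 1)
    (hsum : ∑ x : G, φ x = Matrix.of fun _ _ => (1 : ℝ))
    (C : Fin g → Matrix (Fin g × Fin g) (Fin g × Fin g) ℝ)
    (hC : ∀ k p q, C k p q = φ (-(H k p.1) + H k q.1) p.2 q.2)
    (C0 : Matrix (Fin g × Fin g) (Fin g × Fin g) ℝ)
    (hC0 : C0 = Matrix.of fun p q : Fin g × Fin g =>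
      if p.1 = q.1 then (1 : ℝ) else 0) :
    (C0 + ∑ k, C k =
      (g : ℝ) • (1 : Matrix (Fin g × Fin g) (Fin g × Fin g) ℝ)
        + Matrix.of fun _ _ : Fin g × Fin g => (1 : ℝ)) ∧
    (C0 * C0ᵀ = (g : ℝ) • C0) ∧
    (∀ k, C k * (C k)ᵀ = (g : ℝ) • C k) ∧
    (∀ k, C0 * (C k)ᵀ = Matrix.of fun _ _ : Fin g × Fin g => (1 : ℝ)) ∧
    (∀ k, C k * C0ᵀ = Matrix.of fun _ _ : Fin g × Fin g => (1 : ℝ)) ∧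
    (∀ k k', k ≠ k' →
      C k * (C k')ᵀ = Matrix.of fun _ _ : Fin g × Fin g => (1 : ℝ)) := by
  classical
  -- transpose of φ
  have key : ∀ (a : G) (i j : Fin g), φ a i j = φ (-a) j i := by
    intro a i j
    have := congrFun (congrFun (htr a) j) i
    simpa using this
  -- block multiplication
  have hblock : ∀ (a b : G) (i j : Fin g),
      ∑ r, φ a i r * φ b r j = φ (a + b) i j := by
    intro a b i j
    have := congrFun (congrFun (hmul a b).symm i) j
    rw [Matrix.mul_apply] at this
    exact this
  -- row sums of φ are 1
  have hrow : ∀ (x : G) (i : Fin g), ∑ j, φ x i j = 1 := by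
    intro x i
    have h1 : φ x * (Matrix.of fun _ _ => (1 : ℝ)) = Matrix.of fun _ _ => 1 := by
      rw [← hsum, Finset.mul_sum]
      calc ∑ y, φ x * φ y = ∑ y, φ (x + y) := by
            refine Finset.sum_congr rfl fun y _ => (hmul x y).symm
        _ = ∑ z, φ z := Fintype.sum_equiv (Equiv.addLeft x) _ _ (fun y => rfl)
    have := congrFun (congrFun h1 i) i
    rw [Matrix.mul_apply] at this
    simpa using this
  -- column sums of φ are 1
  have hcolsum : ∀ (x : G) (j : Fin g), ∑ i, φ x i j = 1 := by
    intro x j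
    calc ∑ i, φ x i j = ∑ i, φ (-x) j i := by
          refine Finset.sum_congr rfl fun i _ => key x i j
      _ = 1 := hrow (-x) j
  -- full sum of φ entries
  have hfull : ∀ i j : Fin g, ∑ x : G, φ x i j = 1 := by
    intro i j
    have := congrFun (congrFun hsum i) j
    simpa [Matrix.sum_apply] using this
  -- column version of GH property
  have hcol : ∀ c c' : Fin g, c ≠ c' →
      Function.Bijective fun k => H k c' - H k c := by
    intro c c' hcc
    rw [Fintype.bijective_iff_injective_and_card]
    refine ⟨?_, by simp [hg]⟩
    intro k l hkl
    by_contra hne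
    have hb := (hGH k l hne).injective
    simp only at hkl
    have h2 : H k c' - H l c' = H k c - H l c := by
      have := hkl
      rw [sub_eq_sub_iff_sub_eq_sub] at this
      exact this
    exact hcc (hb h2).symm
  -- C k is symmetric
  have hCsymm : ∀ k, (C k)ᵀ = C k := by
    intro k
    ext p q
    rw [Matrix.transpose_apply, hC, hC]
    have h1 : φ (-(H k q.1) + H k p.1) q.2 p.2
        = φ (-(-(H k q.1) + H k p.1)) p.2 q.2 := key _ _ _
    rw [h1]
    congr 1
    abel
  have hC0symm : C0ᵀ = C0 := by
    ext p q
    rw [Matrix.transpose_apply, hC0]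
    simp only [Matrix.of_apply]
    by_cases h : p.1 = q.1 <;> simp [h, eq_comm]
  -- Part (i)
  have part1 : C0 + ∑ k, C k =
      (g : ℝ) • (1 : Matrix (Fin g × Fin g) (Fin g × Fin g) ℝ)
        + Matrix.of fun _ _ : Fin g × Fin g => (1 : ℝ) := by
    ext p q
    simp only [Matrix.add_apply, Matrix.sum_apply, Matrix.smul_apply,
      Matrix.one_apply, Matrix.of_apply, smul_eq_mul, hC0]
    by_cases h : p.1 = q.1
    · have hterm : ∀ k : Fin g, φ (-(H k p.1) + H k q.1) p.2 q.2
          = if p.2 = q.2 then (1 : ℝ) else 0 := by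
        intro k
        rw [h]
        simp [hzero, Matrix.one_apply]
      rw [Finset.sum_congr rfl fun k _ => hC k p q,
        Finset.sum_congr rfl fun k _ => hterm k]
      by_cases h2 : p.2 = q.2
      · have hpq : p = q := Prod.ext h h2
        simp [h, h2, hpq, add_comm]
      · have hpq : p ≠ q := fun e => h2 (congrArg Prod.snd e)
        simp [h, h2, hpq]
    · have hpq : p ≠ q := fun e => h (congrArg Prod.fst e)
      have hb := hcol p.1 q.1 h
      have hsum2 : ∑ k, C k p q = ∑ x : G, φ x p.2 q.2 := by
        refine Fintype.sum_bijective _ hb _ _ ?_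
        intro k
        rw [hC]
        congr 2
        abel
      rw [hsum2, hfull p.2 q.2]
      simp [h, hpq]
  -- Part (ii) for C0
  have part2 : C0 * C0ᵀ = (g : ℝ) • C0 := by
    rw [hC0symm]
    ext p q
    rw [Matrix.mul_apply, Fintype.sum_prod_type]
    simp only [hC0, Matrix.of_apply, Matrix.smul_apply, smul_eq_mul]
    have hterm : ∀ r1 : Fin g,
        (if p.1 = r1 then (1:ℝ) else 0) * (if r1 = q.1 then (1:ℝ) else 0)
          = if r1 = p.1 then (if p.1 = q.1 then (1:ℝ) else 0) else 0 := by
      intro r1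
      by_cases h1 : r1 = p.1
      · subst h1; simp
      · simp [h1, Ne.symm h1]
    rw [Finset.sum_congr rfl fun r1 _ =>
      Finset.sum_congr rfl fun (r2 : Fin g) _ => hterm r1]
    simp [Finset.sum_ite_eq', Finset.card_univ, mul_comm]
  -- Part (ii) for C k
  have part3 : ∀ k, C k * (C k)ᵀ = (g : ℝ) • C k := by
    intro k
    rw [hCsymm k]
    ext p q
    rw [Matrix.mul_apply, Fintype.sum_prod_type]
    have inner : ∀ r1 : Fin g,
        ∑ r2, C k p (r1, r2) * C k (r1, r2) q = C k p q := by
      intro r1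
      simp only [hC]
      rw [hblock]
      congr 1
      abel
    rw [Finset.sum_congr rfl fun r1 _ => inner r1]
    simp [Matrix.smul_apply, Finset.card_univ]
  -- Part (iii) with C0 on the left
  have part4 : ∀ k, C0 * (C k)ᵀ = Matrix.of fun _ _ : Fin g × Fin g => (1 : ℝ) := by
    intro k
    rw [hCsymm k]
    ext p q
    rw [Matrix.mul_apply, Fintype.sum_prod_type]
    simp only [hC0, hC, Matrix.of_apply]
    have inner : ∀ r1 : Fin g,
        ∑ r2, (if p.1 = r1 then (1:ℝ) else 0) * φ (-(H k r1) + H k q.1) r2 q.2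
          = if p.1 = r1 then ∑ r2, φ (-(H k r1) + H k q.1) r2 q.2 else 0 := by
      intro r1
      by_cases h : p.1 = r1 <;> simp [h]
    rw [Finset.sum_congr rfl fun r1 _ => inner r1, Finset.sum_ite_eq]
    simp [hcolsum]
  -- Part (iii) with C0 on the right
  have part5 : ∀ k, C k * C0ᵀ = Matrix.of fun _ _ : Fin g × Fin g => (1 : ℝ) := by
    intro k
    rw [hC0symm]
    ext p q
    rw [Matrix.mul_apply, Fintype.sum_prod_type]
    simp only [hC0, hC, Matrix.of_apply]
    have inner : ∀ r1 : Fin g,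
        ∑ r2, φ (-(H k p.1) + H k r1) p.2 r2 * (if r1 = q.1 then (1:ℝ) else 0)
          = if r1 = q.1 then ∑ r2, φ (-(H k p.1) + H k r1) p.2 r2 else 0 := by
      intro r1
      by_cases h : r1 = q.1 <;> simp [h]
    rw [Finset.sum_congr rfl fun r1 _ => inner r1, Finset.sum_ite_eq']
    simp [hrow]
  -- Part (iii) for distinct k, k'
  have part6 : ∀ k k', k ≠ k' →
      C k * (C k')ᵀ = Matrix.of fun _ _ : Fin g × Fin g => (1 : ℝ) := by
    intro k k' hne
    rw [hCsymm k']
    ext p q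
    rw [Matrix.mul_apply, Fintype.sum_prod_type]
    have inner : ∀ r1 : Fin g,
        ∑ r2, C k p (r1, r2) * C k' (r1, r2) q
          = φ ((-(H k p.1) + H k r1) + (-(H k' r1) + H k' q.1)) p.2 q.2 := by
      intro r1
      simp only [hC]
      exact hblock _ _ _ _
    rw [Finset.sum_congr rfl fun r1 _ => inner r1]
    have hb : Function.Bijective
        (fun r1 : Fin g => -(H k p.1) + (H k r1 - H k' r1) + H k' q.1) := by
      have h1 := hGH k k' hne
      exact (Equiv.addRight (H k' q.1)).bijective.comp
        ((Equiv.addLeft (-(H k p.1))).bijective.comp h1)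
    have hsum2 : ∑ r1, φ ((-(H k p.1) + H k r1) + (-(H k' r1) + H k' q.1)) p.2 q.2
        = ∑ x : G, φ x p.2 q.2 := by
      refine Fintype.sum_bijective _ hb _ _ ?_
      intro r1
      show φ _ p.2 q.2 = φ (-(H k p.1) + (H k r1 - H k' r1) + H k' q.1) p.2 q.2
      have harg : (-(H k p.1) + H k r1) + (-(H k' r1) + H k' q.1)
          = -(H k p.1) + (H k r1 - H k' r1) + H k' q.1 := by abel
      rw [harg]
    rw [hsum2, hfull]
    simp
  exact ⟨part1, part2, part3, part4, part5, part6⟩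

end
end

section
/- Consider feasible parameters for a linked system of f ≥ 3 proper symmetric group divisible designs: v = mn, λ₁ = k(k−m)/(m(n−1)), λ₂ = k²/(mn), and σ−τ = ±√(k(mn−k)/(m(n−1))). If λ₁ = 0 and all parameters and α = k/m are integers, then there exists a positive integer l such that (v,k,m,n,λ₁,λ₂) = (n³l², n²l², n²l², n, 0, nl²). -/
/-!
With `λ₁ = 0` the formula for `λ₁` forces `k = m`. Then `(σ − τ)² = m`, `m = n λ₂`, and the
equation for `τ` gives `σ − τ = m − nτ = n(λ₂ − τ)`. Hence `m = n²l²` with `l = |λ₂ − τ|`, and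
`λ₂ = m / n = n l²`.
-/

theorem eq_of_mul_sub_div_eq_zero {K : Type*} [Field K] {k m c : K} (hk : k ≠ 0)
    (hmc : m * c ≠ 0) (h : k * (k - m) / (m * c) = 0) : k = m := by
  rcases div_eq_zero_iff.mp h with h | h
  · exact sub_eq_zero.mp ((mul_eq_zero.mp h).resolve_left hk)
  · exact absurd h hmc

theorem exists_eq_sq_mul_sq_of_sq_eq {m n q t s : ℤ} (hn : n ≠ 0) (hm : m ≠ 0)
    (hq : m = n * q) (hs : s ^ 2 = m) (ht : n * t = m - s) :
    ∃ l : ℕ, 0 < l ∧ m = n ^ 2 * l ^ 2 ∧ q = n * l ^ 2 := by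
  have hsd : s = n * (q - t) := by linear_combination ht + hq
  have hmd : m = n ^ 2 * (q - t) ^ 2 := by rw [← hs, hsd]; ring
  have hd : q - t ≠ 0 := fun hd => hm (by rw [hmd, hd]; ring)
  refine ⟨(q - t).natAbs, Int.natAbs_pos.mpr hd, ?_, ?_⟩
  · rw [Int.natAbs_sq, hmd]
  · apply mul_left_cancel₀ hn
    rw [Int.natAbs_sq, ← hq, hmd]
    ring

theorem stmt19_general (v k m n : ℕ) (l1 l2 σ τ : ℤ)
    (hm : 2 ≤ m) (hn : 2 ≤ n) (hv : v = m * n)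
    (hk0 : 0 < k)
    (hl1 : (l1 : ℝ) = (k : ℝ) * ((k : ℝ) - (m : ℝ)) / ((m : ℝ) * ((n : ℝ) - 1)))
    (hl2 : (l2 : ℝ) = (k : ℝ) ^ 2 / ((m : ℝ) * (n : ℝ)))
    (hτ : ((m : ℝ) * (n : ℝ)) * (τ : ℝ) =
      (k : ℝ) ^ 2 - (k : ℝ) * ((σ : ℝ) - (τ : ℝ)))
    (hst : ((σ : ℝ) - (τ : ℝ)) ^ 2 =
      (k : ℝ) * ((m : ℝ) * (n : ℝ) - (k : ℝ)) / ((m : ℝ) * ((n : ℝ) - 1)))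
    (hzero : l1 = 0) :
    ∃ l : ℕ, 0 < l ∧ v = n ^ 3 * l ^ 2 ∧ k = n ^ 2 * l ^ 2 ∧
      m = n ^ 2 * l ^ 2 ∧ l2 = (n : ℤ) * (l : ℤ) ^ 2 := by
  have hm0 : (m : ℝ) ≠ 0 := by positivity
  have hn0 : (n : ℝ) ≠ 0 := by positivity
  have hn1 : (n : ℝ) - 1 ≠ 0 := by
    have : (2 : ℝ) ≤ n := by exact_mod_cast hn
    linarith
  have hkm : k = m := by
    rw [hzero, Int.cast_zero, eq_comm] at hl1
    exact_mod_cast eq_of_mul_sub_div_eq_zero (by positivity) (mul_ne_zero hm0 hn1) hl1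
  subst hkm hv
  have hq : (k : ℝ) = n * l2 := by rw [hl2]; field_simp
  have hs : ((σ : ℝ) - τ) ^ 2 = k := by rw [hst]; field_simp
  have ht : (n : ℝ) * τ = k - (σ - τ) := mul_left_cancel₀ hm0 (by linear_combination hτ)
  obtain ⟨l, hl, hkl, hl2l⟩ := exists_eq_sq_mul_sq_of_sq_eq (m := k) (n := n)
    (by positivity) (by positivity) (by exact_mod_cast hq) (by exact_mod_cast hs)
    (by exact_mod_cast ht)
  have hkl : k = n ^ 2 * l ^ 2 := by exact_mod_cast hkl
  exact ⟨l, hl, by rw [hkl]; ring, hkl, hkl, hl2l⟩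

/-- Feasible parameters of a linked system of `f ≥ 3` proper symmetric group
divisible designs with `λ₁ = 0`: if `v = mn`, `λ₁ = k(k−m)/(m(n−1))`,
`λ₂ = k²/(mn)`, `α = k/m`, `σ, τ` are integers with
`mn·σ = k² + (mn−k)(σ−τ)`, `mn·τ = k² − k(σ−τ)`, and
`(σ−τ)² = k(mn−k)/(m(n−1))`, then with `λ₁ = 0` there exists a positive
integer `l` such that `(v,k,m,n,λ₁,λ₂) = (n³l², n²l², n²l², n, 0, nl²)`. -/
theorem stmt19 (v k m n : ℕ) (l1 l2 σ τ α : ℤ)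
    (hm : 2 ≤ m) (hn : 2 ≤ n) (hv : v = m * n)
    (hk0 : 0 < k) (hkv : k < v)
    (hl1 : (l1 : ℝ) = (k : ℝ) * ((k : ℝ) - (m : ℝ)) / ((m : ℝ) * ((n : ℝ) - 1)))
    (hl2 : (l2 : ℝ) = (k : ℝ) ^ 2 / ((m : ℝ) * (n : ℝ)))
    (hα : (α : ℝ) = (k : ℝ) / (m : ℝ))
    (hσ : ((m : ℝ) * (n : ℝ)) * (σ : ℝ) =
      (k : ℝ) ^ 2 + ((m : ℝ) * (n : ℝ) - (k : ℝ)) * ((σ : ℝ) - (τ : ℝ)))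
    (hτ : ((m : ℝ) * (n : ℝ)) * (τ : ℝ) =
      (k : ℝ) ^ 2 - (k : ℝ) * ((σ : ℝ) - (τ : ℝ)))
    (hst : ((σ : ℝ) - (τ : ℝ)) ^ 2 =
      (k : ℝ) * ((m : ℝ) * (n : ℝ) - (k : ℝ)) / ((m : ℝ) * ((n : ℝ) - 1)))
    (hzero : l1 = 0) :
    ∃ l : ℕ, 0 < l ∧ v = n ^ 3 * l ^ 2 ∧ k = n ^ 2 * l ^ 2 ∧
      m = n ^ 2 * l ^ 2 ∧ l2 = (n : ℤ) * (l : ℤ) ^ 2 :=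
  stmt19_general v k m n l1 l2 σ τ hm hn hv hk0 hl1 hl2 hτ hst hzero
end
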